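/- arXiv:1611.09241 — 2 statements merged into one kernel-verified Lean document; each statement's English description precedes it below -/
import Mathlib

section
/- With the notation of the cut-off construction below, the following Lipschitz estimate holds: for all strongly measurable u, v : [σ,T] → E₁ with ‖u‖_{L^p(σ,T;E₁)} < ∞, ‖v‖_{L^p(σ,T;E₁)} < ∞ and with j∘u, j∘v : [σ,T] → E_p continuous, one has ( ∫_σ^T ‖Q(t,u) − Q(t,v)‖_E^p dt )^{1/p} ≤ 6 C_Q λ · ( ‖u − v‖_{L^p(σ,T;E₁)} + sup_{s∈[σ,T]} ‖j(u(s)) − j(v(s))‖_{E_p} ). -/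
set_option linter.unusedSectionVars false
set_option linter.unusedVariables false
set_option maxHeartbeats 1000000

open MeasureTheory Filter Topology


/-- The cut-off function `Φ_λ`: equal to `1` on `[0, λ]`, affine on `[λ, 2λ]`
(given by `2 - s/λ`), and `0` on `[2λ, ∞)`. -/
noncomputable def cutoffPhi (lam s : ℝ) : ℝ := max 0 (min 1 (2 - s / lam))

lemma cutoffPhi_nonneg (lam s : ℝ) : 0 ≤ cutoffPhi lam s := le_max_left _ _

lemma cutoffPhi_le_one (lam s : ℝ) : cutoffPhi lam s ≤ 1 :=
  max_le zero_le_one (min_le_left _ _)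

lemma cutoffPhi_eq_zero {lam s : ℝ} (hlam : 0 < lam) (h : 2 * lam ≤ s) :
    cutoffPhi lam s = 0 := by
  have h2 : 2 - s / lam ≤ 0 := by
    rw [sub_nonpos, le_div_iff₀ hlam]; linarith
  have : min 1 (2 - s / lam) ≤ 0 := le_trans (min_le_right _ _) h2
  simp [cutoffPhi, max_eq_left this]

lemma cutoffPhi_antitone {lam a b : ℝ} (hlam : 0 < lam) (hab : a ≤ b) :
    cutoffPhi lam b ≤ cutoffPhi lam a := by
  apply max_le_max le_rfl
  apply min_le_min le_rfl
  gcongr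

lemma cutoffPhi_lipschitz {lam : ℝ} (hlam : 0 < lam) (a b : ℝ) :
    |cutoffPhi lam a - cutoffPhi lam b| ≤ |a - b| / lam := by
  have h1 : |cutoffPhi lam a - cutoffPhi lam b|
      ≤ |min 1 (2 - a / lam) - min 1 (2 - b / lam)| := by
    unfold cutoffPhi
    rw [max_comm 0 (min 1 (2 - a / lam)), max_comm 0 (min 1 (2 - b / lam))]
    exact abs_max_sub_max_le_abs _ _ _
  have h2 : |min 1 (2 - a / lam) - min 1 (2 - b / lam)|
      ≤ max |(1:ℝ) - 1| |(2 - a / lam) - (2 - b / lam)| := abs_min_sub_min_le_max _ _ _ _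
  have h3 : |(2 - a / lam) - (2 - b / lam)| = |a - b| / lam := by
    rw [show (2 - a / lam) - (2 - b / lam) = (b - a) / lam by ring,
      abs_div, abs_of_pos hlam, abs_sub_comm]
  refine h1.trans (h2.trans ?_)
  rw [h3]
  simp [abs_nonneg, div_nonneg (abs_nonneg _) hlam.le]

lemma cutoffPhi_mul_le {lam a : ℝ} (hlam : 0 < lam) (ha : 0 ≤ a) :
    cutoffPhi lam a * a ≤ lam := by
  rcases le_or_gt a lam with h | h
  · calc cutoffPhi lam a * a ≤ 1 * a := by
          apply mul_le_mul_of_nonneg_right (cutoffPhi_le_one _ _) ha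
       _ ≤ lam := by linarith
  · have h2 : cutoffPhi lam a ≤ 2 - a / lam ∨ cutoffPhi lam a = 0 := by
      rcases le_or_gt (min 1 (2 - a/lam)) 0 with h' | h'
      · right; simp [cutoffPhi, max_eq_left h']
      · left
        have : cutoffPhi lam a = min 1 (2 - a/lam) := max_eq_right h'.le
        rw [this]; exact min_le_right _ _
    rcases h2 with h2 | h2
    · have : cutoffPhi lam a * a ≤ (2 - a / lam) * a := by
        apply mul_le_mul_of_nonneg_right h2 ha
      refine le_trans this ?_
      have h4 : a / lam * lam = a := div_mul_cancel₀ a hlam.ne'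
      have h5 : a / lam * lam * a = a * a := by rw [h4]
      nlinarith [sq_nonneg (a - lam), hlam, h5]
    · rw [h2]; simp [hlam.le]


lemma memLp_of_integrable_rpow {α : Type*} [MeasurableSpace α] {μ : Measure α}
    {p : ℝ} (hp : 1 ≤ p) {f : α → ℝ}
    (hfm : AEStronglyMeasurable f μ)
    (hfi : Integrable (fun x => ‖f x‖ ^ p) μ) :
    MemLp f (ENNReal.ofReal p) μ := by
  have hp0 : (0:ℝ) < p := lt_of_lt_of_le one_pos hp
  have hq0 : ENNReal.ofReal p ≠ 0 := by simp [ENNReal.ofReal_eq_zero, not_le, hp0]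
  have hqt : ENNReal.ofReal p ≠ ⊤ := ENNReal.ofReal_ne_top
  have htr : (ENNReal.ofReal p).toReal = p := ENNReal.toReal_ofReal hp0.le
  have h1 : MemLp (fun x => ‖f x‖ ^ (ENNReal.ofReal p).toReal)
      (ENNReal.ofReal p / ENNReal.ofReal p) μ := by
    rw [ENNReal.div_self hq0 hqt, htr]
    exact (memLp_one_iff_integrable).mpr hfi
  exact (memLp_norm_rpow_iff hfm hq0 hqt).mp h1

lemma integral_rpow_eq_eLpNorm {α : Type*} [MeasurableSpace α] {μ : Measure α}
    {p : ℝ} (hp : 1 ≤ p) {f : α → ℝ} (hf0 : ∀ x, 0 ≤ f x)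
    (hf : MemLp f (ENNReal.ofReal p) μ) :
    (∫ x, f x ^ p ∂μ) ^ (1/p) = (eLpNorm f (ENNReal.ofReal p) μ).toReal := by
  have hp0 : (0:ℝ) < p := lt_of_lt_of_le one_pos hp
  have hq0 : ENNReal.ofReal p ≠ 0 := by simp [ENNReal.ofReal_eq_zero, not_le, hp0]
  have htr : (ENNReal.ofReal p).toReal = p := ENNReal.toReal_ofReal hp0.le
  rw [MemLp.eLpNorm_eq_integral_rpow_norm hq0 ENNReal.ofReal_ne_top hf]
  rw [ENNReal.toReal_ofReal]
  · rw [htr, one_div]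
    congr 1
    apply integral_congr_ae
    filter_upwards with x
    rw [Real.norm_eq_abs, abs_of_nonneg (hf0 x)]
  · positivity

lemma lp_add_le {α : Type*} [MeasurableSpace α] {μ : Measure α}
    {p : ℝ} (hp : 1 ≤ p) {f g : α → ℝ}
    (hfm : AEStronglyMeasurable f μ) (hgm : AEStronglyMeasurable g μ)
    (hf0 : ∀ x, 0 ≤ f x) (hg0 : ∀ x, 0 ≤ g x)
    (hfi : Integrable (fun x => f x ^ p) μ) (hgi : Integrable (fun x => g x ^ p) μ) :
    (∫ x, (f x + g x) ^ p ∂μ) ^ (1/p)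
      ≤ (∫ x, f x ^ p ∂μ) ^ (1/p) + (∫ x, g x ^ p ∂μ) ^ (1/p) := by
  have hp0 : (0:ℝ) < p := lt_of_lt_of_le one_pos hp
  have habs : ∀ (h : α → ℝ), (∀ x, 0 ≤ h x) →
      (fun x => ‖h x‖ ^ p) = fun x => h x ^ p := by
    intro h h0; funext x; rw [Real.norm_eq_abs, abs_of_nonneg (h0 x)]
  have hfl : MemLp f (ENNReal.ofReal p) μ :=
    memLp_of_integrable_rpow hp hfm (by rwa [habs f hf0])
  have hgl : MemLp g (ENNReal.ofReal p) μ :=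
    memLp_of_integrable_rpow hp hgm (by rwa [habs g hg0])
  have hfgl : MemLp (f + g) (ENNReal.ofReal p) μ := hfl.add hgl
  have key : eLpNorm (f + g) (ENNReal.ofReal p) μ
      ≤ eLpNorm f (ENNReal.ofReal p) μ + eLpNorm g (ENNReal.ofReal p) μ :=
    eLpNorm_add_le hfm hgm (by
      rw [← ENNReal.ofReal_one]; exact ENNReal.ofReal_le_ofReal hp)
  have e1 := integral_rpow_eq_eLpNorm hp hf0 hfl
  have e2 := integral_rpow_eq_eLpNorm hp hg0 hgl
  have e3 : (∫ x, (f x + g x) ^ p ∂μ) ^ (1/p)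
      = (eLpNorm (f + g) (ENNReal.ofReal p) μ).toReal :=
    integral_rpow_eq_eLpNorm hp (fun x => add_nonneg (hf0 x) (hg0 x)) hfgl
  rw [e1, e2, e3]
  rw [← ENNReal.toReal_add hfl.eLpNorm_ne_top hgl.eLpNorm_ne_top]
  exact ENNReal.toReal_mono (by
    exact ENNReal.add_ne_top.mpr ⟨hfl.eLpNorm_ne_top, hgl.eLpNorm_ne_top⟩) key


/-- If the "running integral" of a nonnegative function is bounded by `c` at every
point of `E`, then the integral over `E` is bounded by `c`. -/
lemma integral_subset_le {f : ℝ → ℝ} {a T c : ℝ}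
    (hf0 : ∀ x, 0 ≤ f x) (hfi : IntegrableOn f (Set.Ioc a T))
    {E : Set ℝ} (hEm : MeasurableSet E) (hEs : E ⊆ Set.Ioc a T) (hc : 0 ≤ c)
    (h : ∀ t ∈ E, (∫ x in Set.Ioc a t, f x) ≤ c) :
    (∫ x in E, f x) ≤ c := by
  rcases E.eq_empty_or_nonempty with rfl | hne
  · simpa using hc
  have hbdd : BddAbove E := ⟨T, fun x hx => (hEs hx).2⟩
  set t₀ := sSup E with ht₀
  have ht₀T : t₀ ≤ T := csSup_le hne fun x hx => (hEs hx).2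
  have hsub : E ⊆ Set.Ioc a t₀ := fun x hx => ⟨(hEs hx).1, le_csSup hbdd hx⟩
  have hfi₀ : IntegrableOn f (Set.Ioc a t₀) :=
    hfi.mono_set (Set.Ioc_subset_Ioc le_rfl ht₀T)
  have step1 : (∫ x in E, f x) ≤ ∫ x in Set.Ioc a t₀, f x :=
    setIntegral_mono_set hfi₀ (Filter.Eventually.of_forall hf0)
      (HasSubset.Subset.eventuallyLE hsub)
  refine step1.trans ?_
  obtain ⟨w, hwmono, hwt, hwmem⟩ := exists_seq_tendsto_sSup hne hbdd
  have hwle : ∀ n, w n ≤ t₀ := fun n => le_csSup hbdd (hwmem n)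
  have hind0 : ∀ (s : Set ℝ) x, 0 ≤ s.indicator f x :=
    fun s x => Set.indicator_nonneg (fun y _ => hf0 y) x
  have hconv : Tendsto (fun n => ∫ x in Set.Ioc a (w n), f x) atTop
      (𝓝 (∫ x in Set.Ioc a t₀, f x)) := by
    have hrw : ∀ t, t ≤ T → (∫ x in Set.Ioc a t, f x)
        = ∫ x, (Set.Ioc a t).indicator f x ∂(volume.restrict (Set.Ioc a T)) := by
      intro t ht
      rw [integral_indicator measurableSet_Ioc, Measure.restrict_restrict measurableSet_Ioc,
        Set.inter_eq_left.mpr (Set.Ioc_subset_Ioc le_rfl ht)]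
    have hrw1 : ∀ n, (∫ x in Set.Ioc a (w n), f x)
        = ∫ x, (Set.Ioc a (w n)).indicator f x ∂(volume.restrict (Set.Ioc a T)) :=
      fun n => hrw _ ((hEs (hwmem n)).2)
    simp only [hrw1, hrw t₀ ht₀T]
    apply tendsto_integral_of_dominated_convergence (fun x => f x)
    · exact fun n => hfi.1.indicator measurableSet_Ioc
    · exact hfi
    · intro n
      filter_upwards with x
      rw [Real.norm_eq_abs, abs_of_nonneg (hind0 _ x)]
      exact Set.indicator_le_self' (fun y _ => hf0 y) x
    · have hnull : (volume.restrict (Set.Ioc a T)) {t₀} = 0 := by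
        apply le_antisymm _ (by positivity)
        refine le_trans (Measure.restrict_apply_le _ _) ?_
        simp
      filter_upwards [measure_eq_zero_iff_ae_notMem.mp hnull] with x hx
      by_cases hmem : x ∈ Set.Ioc a t₀
      · have hxlt : x < t₀ := lt_of_le_of_ne hmem.2 (by simpa using hx)
        have hev : ∀ᶠ n in atTop, x < w n := hwt.eventually (eventually_gt_nhds hxlt)
        have : (Set.Ioc a t₀).indicator f x = f x := Set.indicator_of_mem hmem f
        rw [this]
        apply Tendsto.congr' _ tendsto_const_nhds
        filter_upwards [hev] with n hn
        exact (Set.indicator_of_mem (Set.mem_Ioc.mpr ⟨hmem.1, hn.le⟩) f).symm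
      · have : (Set.Ioc a t₀).indicator f x = 0 := Set.indicator_of_notMem hmem f
        rw [this]
        apply Tendsto.congr' _ tendsto_const_nhds
        filter_upwards with n
        refine (Set.indicator_of_notMem (fun hxn => hmem ?_) f).symm
        exact ⟨hxn.1, hxn.2.trans (hwle n)⟩
  exact le_of_tendsto hconv (Eventually.of_forall fun n => h _ (hwmem n))


/-- The `L^p(a,b;E₁)`-norm `( ∫_a^b ‖u(s)‖^p ds )^{1/p}`. -/
noncomputable def lpNormOn {E₁ : Type*} [NormedAddCommGroup E₁]
    (p a b : ℝ) (u : ℝ → E₁) : ℝ :=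
  (∫ s in Set.Ioc a b, ‖u s‖ ^ p) ^ (1 / p)

section core

variable {E₁ Ep : Type*} [NormedAddCommGroup E₁] [NormedSpace ℝ E₁]
  [NormedAddCommGroup Ep] [NormedSpace ℝ Ep]
  (j : E₁ →L[ℝ] Ep) (uσ : Ep) {p σ T lam : ℝ} (u : ℝ → E₁)

-- boundedness of the sup family
lemma bdd_range (hu_cont : ContinuousOn (fun t => j (u t)) (Set.Icc σ T))
    {t : ℝ} (ht : t ≤ T) :
    BddAbove (Set.range fun s : Set.Icc σ t => ‖j (u (s : ℝ)) - uσ‖) := by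
  obtain ⟨C, hC⟩ := isCompact_Icc.exists_bound_of_continuousOn hu_cont
  refine ⟨C + ‖uσ‖, ?_⟩
  rintro y ⟨s, rfl⟩
  have hs : (s : ℝ) ∈ Set.Icc σ T := ⟨s.2.1, s.2.2.trans ht⟩
  calc ‖j (u (s : ℝ)) - uσ‖ ≤ ‖j (u (s : ℝ))‖ + ‖uσ‖ := norm_sub_le _ _
    _ ≤ C + ‖uσ‖ := by have := hC _ hs; linarith

lemma su_nonneg (t : ℝ) : 0 ≤ ⨆ s : Set.Icc σ t, ‖j (u (s : ℝ)) - uσ‖ :=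
  Real.iSup_nonneg fun _ => norm_nonneg _

lemma val_le_su (hu_cont : ContinuousOn (fun t => j (u t)) (Set.Icc σ T))
    {t : ℝ} (ht : t ∈ Set.Icc σ T) :
    ‖j (u t) - uσ‖ ≤ ⨆ s : Set.Icc σ t, ‖j (u (s : ℝ)) - uσ‖ :=
  le_ciSup (bdd_range j uσ u hu_cont ht.2) (⟨t, ht.1, le_rfl⟩ : Set.Icc σ t)

lemma su_mono (hu_cont : ContinuousOn (fun t => j (u t)) (Set.Icc σ T))
    {t₁ t₂ : ℝ} (h12 : t₁ ≤ t₂) (h2 : t₂ ≤ T) :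
    (⨆ s : Set.Icc σ t₁, ‖j (u (s : ℝ)) - uσ‖)
      ≤ ⨆ s : Set.Icc σ t₂, ‖j (u (s : ℝ)) - uσ‖ := by
  rcases lt_or_ge t₁ σ with h | h
  · have : IsEmpty (Set.Icc σ t₁) := ⟨fun s => (not_lt.mpr (s.2.1.trans s.2.2)) h⟩
    rw [iSup_of_empty']
    simpa using su_nonneg j uσ u t₂
  · have hne : Nonempty (Set.Icc σ t₁) := ⟨⟨σ, le_rfl, h⟩⟩
    refine ciSup_le fun s => ?_
    exact le_ciSup (bdd_range j uσ u hu_cont h2)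
      (⟨(s : ℝ), s.2.1, s.2.2.trans h12⟩ : Set.Icc σ t₂)

lemma lpNormOn_nonneg (t : ℝ) : 0 ≤ lpNormOn p σ t u :=
  Real.rpow_nonneg (integral_nonneg fun s => Real.rpow_nonneg (norm_nonneg _) _) _

lemma lpNormOn_rpow (hp0 : 0 < p) (t : ℝ) :
    lpNormOn p σ t u ^ p = ∫ s in Set.Ioc σ t, ‖u s‖ ^ p := by
  have hI0 : 0 ≤ ∫ s in Set.Ioc σ t, ‖u s‖ ^ p :=
    integral_nonneg fun s => Real.rpow_nonneg (norm_nonneg _) _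
  rw [lpNormOn, ← Real.rpow_mul hI0, one_div, inv_mul_cancel₀ hp0.ne', Real.rpow_one]

lemma Fu_mono (hp0 : 0 < p)
    (hu_int : IntegrableOn (fun s => ‖u s‖ ^ p) (Set.Ioc σ T))
    {t₁ t₂ : ℝ} (h12 : t₁ ≤ t₂) (h2 : t₂ ≤ T) :
    (∫ s in Set.Ioc σ t₁, ‖u s‖ ^ p) ≤ ∫ s in Set.Ioc σ t₂, ‖u s‖ ^ p :=
  setIntegral_mono_set (hu_int.mono_set (Set.Ioc_subset_Ioc le_rfl h2))
    (Eventually.of_forall fun s => Real.rpow_nonneg (norm_nonneg _) _)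
    (HasSubset.Subset.eventuallyLE (Set.Ioc_subset_Ioc le_rfl h12))

lemma lpNormOn_mono (hp0 : 0 < p)
    (hu_int : IntegrableOn (fun s => ‖u s‖ ^ p) (Set.Ioc σ T))
    {t₁ t₂ : ℝ} (h12 : t₁ ≤ t₂) (h2 : t₂ ≤ T) :
    lpNormOn p σ t₁ u ≤ lpNormOn p σ t₂ u :=
  Real.rpow_le_rpow (integral_nonneg fun s => Real.rpow_nonneg (norm_nonneg _) _)
    (Fu_mono u hp0 hu_int h12 h2) (by positivity)

lemma Nu_measurable (hp0 : 0 < p)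
    (hu_int : IntegrableOn (fun s => ‖u s‖ ^ p) (Set.Ioc σ T))
    (hu_cont : ContinuousOn (fun t => j (u t)) (Set.Icc σ T)) (c : ℝ) :
    MeasurableSet {t | t ∈ Set.Ioc σ T ∧
      lpNormOn p σ t u + (⨆ s : Set.Icc σ t, ‖j (u (s : ℝ)) - uσ‖) ≤ c} := by
  set N' : ℝ → ℝ := fun t =>
    lpNormOn p σ (min t T) u + ⨆ s : Set.Icc σ (min t T), ‖j (u (s : ℝ)) - uσ‖ with hN'
  have hmono : Monotone N' := by
    intro t₁ t₂ h12
    have hm : min t₁ T ≤ min t₂ T := min_le_min h12 le_rfl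
    exact add_le_add (lpNormOn_mono u hp0 hu_int hm (min_le_right _ _))
      (su_mono j uσ u hu_cont hm (min_le_right _ _))
  have : {t | t ∈ Set.Ioc σ T ∧
      lpNormOn p σ t u + (⨆ s : Set.Icc σ t, ‖j (u (s : ℝ)) - uσ‖) ≤ c}
      = Set.Ioc σ T ∩ N' ⁻¹' (Set.Iic c) := by
    ext t
    simp only [Set.mem_setOf_eq, Set.mem_inter_iff, Set.mem_preimage, Set.mem_Iic, hN']
    constructor
    · rintro ⟨ht, hle⟩
      exact ⟨ht, by rwa [min_eq_left ht.2]⟩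
    · rintro ⟨ht, hle⟩
      exact ⟨ht, by rwa [min_eq_left ht.2] at hle⟩
  rw [this]
  exact measurableSet_Ioc.inter (hmono.measurable measurableSet_Iic)

end core

section core2
variable {E₁ Ep : Type*} [NormedAddCommGroup E₁] [NormedSpace ℝ E₁]
  [NormedAddCommGroup Ep] [NormedSpace ℝ Ep]
  (j : E₁ →L[ℝ] Ep) (uσ : Ep) {p σ T lam : ℝ} (u : ℝ → E₁)

lemma jusub_meas (hu_meas : AEStronglyMeasurable u (volume.restrict (Set.Ioc σ T))) :
    AEStronglyMeasurable (fun t => ‖j (u t) - uσ‖) (volume.restrict (Set.Ioc σ T)) :=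
  ((j.continuous.comp_aestronglyMeasurable hu_meas).sub aestronglyMeasurable_const).norm

lemma q_meas (hu_meas : AEStronglyMeasurable u (volume.restrict (Set.Ioc σ T))) :
    AEStronglyMeasurable (fun t => ‖j (u t) - uσ‖ * ‖u t‖)
      (volume.restrict (Set.Ioc σ T)) :=
  (jusub_meas j uσ u hu_meas).mul hu_meas.norm

lemma rpow_meas {α : Type*} [MeasurableSpace α] {f : α → ℝ} {μ : Measure α}
    (hf : AEStronglyMeasurable f μ) {p : ℝ}
    (hp0 : 0 ≤ p) : AEStronglyMeasurable (fun t => f t ^ p) μ :=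
  (Real.continuous_rpow_const hp0).comp_aestronglyMeasurable hf

lemma q_int (hp0 : 0 < p)
    (hu_meas : AEStronglyMeasurable u (volume.restrict (Set.Ioc σ T)))
    (hu_int : IntegrableOn (fun s => ‖u s‖ ^ p) (Set.Ioc σ T))
    (hu_cont : ContinuousOn (fun t => j (u t)) (Set.Icc σ T)) :
    IntegrableOn (fun t => (‖j (u t) - uσ‖ * ‖u t‖) ^ p) (Set.Ioc σ T) := by
  obtain ⟨C, hC⟩ := isCompact_Icc.exists_bound_of_continuousOn hu_cont
  set C' := |C| + ‖uσ‖ with hC'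
  have hC0 : 0 ≤ C' := add_nonneg (abs_nonneg _) (norm_nonneg _)
  have hbound : ∀ t ∈ Set.Ioc σ T, ‖j (u t) - uσ‖ ≤ C' := by
    intro t ht
    calc ‖j (u t) - uσ‖ ≤ ‖j (u t)‖ + ‖uσ‖ := norm_sub_le _ _
      _ ≤ C' := by
          have := hC t ⟨ht.1.le, ht.2⟩
          have : ‖j (u t)‖ ≤ |C| := this.trans (le_abs_self C)
          linarith
  apply Integrable.mono (hu_int.const_mul (C' ^ p))
  · exact rpow_meas ((q_meas j uσ u hu_meas).mono_measure
      (le_refl _)) hp0.le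
  · filter_upwards [MeasureTheory.ae_restrict_mem measurableSet_Ioc] with t ht
    have h1 : 0 ≤ ‖j (u t) - uσ‖ * ‖u t‖ := mul_nonneg (norm_nonneg _) (norm_nonneg _)
    rw [Real.norm_eq_abs, abs_of_nonneg (Real.rpow_nonneg h1 p), Real.norm_eq_abs]
    have h2 : (‖j (u t) - uσ‖ * ‖u t‖) ^ p ≤ (C' * ‖u t‖) ^ p := by
      apply Real.rpow_le_rpow h1 (mul_le_mul_of_nonneg_right (hbound t ht) (norm_nonneg _)) hp0.le
    rw [Real.mul_rpow hC0 (norm_nonneg _)] at h2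
    exact h2.trans (le_abs_self _)
end core2

section core3
variable {E₁ Ep : Type*} [NormedAddCommGroup E₁] [NormedSpace ℝ E₁]
  [NormedAddCommGroup Ep] [NormedSpace ℝ Ep]
  (j : E₁ →L[ℝ] Ep) (uσ : Ep) {p σ T lam : ℝ} (u : ℝ → E₁)

lemma core_a (hp : 1 ≤ p) (hσT : σ ≤ T) (hlam : 0 < lam)
    (hu_int : IntegrableOn (fun s => ‖u s‖ ^ p) (Set.Ioc σ T))
    (hu_cont : ContinuousOn (fun t => j (u t)) (Set.Icc σ T)) :
    (∫ t in {t | t ∈ Set.Ioc σ T ∧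
        lpNormOn p σ t u + (⨆ s : Set.Icc σ t, ‖j (u (s : ℝ)) - uσ‖) ≤ 2 * lam},
      ‖u t‖ ^ p) ≤ (2 * lam) ^ p := by
  have hp0 : (0:ℝ) < p := lt_of_lt_of_le one_pos hp
  set E := {t | t ∈ Set.Ioc σ T ∧
      lpNormOn p σ t u + (⨆ s : Set.Icc σ t, ‖j (u (s : ℝ)) - uσ‖) ≤ 2 * lam} with hE
  apply integral_subset_le (fun s => Real.rpow_nonneg (norm_nonneg _) _) hu_int
    (Nu_measurable j uσ u hp0 hu_int hu_cont (2*lam)) (fun t ht => ht.1)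
    (Real.rpow_nonneg (by linarith) _)
  intro t ht
  rw [← lpNormOn_rpow u hp0 t]
  apply Real.rpow_le_rpow (lpNormOn_nonneg u t) _ hp0.le
  calc lpNormOn p σ t u
      ≤ lpNormOn p σ t u + (⨆ s : Set.Icc σ t, ‖j (u (s : ℝ)) - uσ‖) :=
        le_add_of_nonneg_right (su_nonneg j uσ u t)
    _ ≤ 2 * lam := ht.2

lemma core_b (hp : 1 ≤ p) (hσT : σ ≤ T) (hlam : 0 < lam)
    (hu_meas : AEStronglyMeasurable u (volume.restrict (Set.Ioc σ T)))
    (hu_int : IntegrableOn (fun s => ‖u s‖ ^ p) (Set.Ioc σ T))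
    (hu_cont : ContinuousOn (fun t => j (u t)) (Set.Icc σ T)) :
    (∫ t in {t | t ∈ Set.Ioc σ T ∧
        lpNormOn p σ t u + (⨆ s : Set.Icc σ t, ‖j (u (s : ℝ)) - uσ‖) ≤ 2 * lam},
      (‖j (u t) - uσ‖ * ‖u t‖) ^ p) ≤ (lam ^ 2) ^ p := by
  have hp0 : (0:ℝ) < p := lt_of_lt_of_le one_pos hp
  set Nu : ℝ → ℝ := fun t =>
    lpNormOn p σ t u + (⨆ s : Set.Icc σ t, ‖j (u (s : ℝ)) - uσ‖) with hNu
  set E := {t | t ∈ Set.Ioc σ T ∧ Nu t ≤ 2 * lam} with hE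
  have hEm : MeasurableSet E := Nu_measurable j uσ u hp0 hu_int hu_cont (2*lam)
  have hEs : E ⊆ Set.Ioc σ T := fun t ht => ht.1
  have hf0 : ∀ s, (0:ℝ) ≤ ‖u s‖ ^ p := fun s => Real.rpow_nonneg (norm_nonneg _) _
  rcases E.eq_empty_or_nonempty with hEe | hne
  · rw [hEe]
    simp only [Measure.restrict_empty, integral_zero_measure]
    positivity
  -- the sup of ‖j(u t) - uσ‖ over E
  have hval2lam : ∀ t ∈ E, ‖j (u t) - uσ‖ ≤ 2 * lam := by
    intro t ht
    calc ‖j (u t) - uσ‖ ≤ ⨆ s : Set.Icc σ t, ‖j (u (s : ℝ)) - uσ‖ :=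
          val_le_su j uσ u hu_cont ⟨ht.1.1.le, ht.1.2⟩
      _ ≤ Nu t := le_add_of_nonneg_left (lpNormOn_nonneg u t)
      _ ≤ 2 * lam := ht.2
  set S := sSup ((fun t => ‖j (u t) - uσ‖) '' E) with hS
  have hbddim : BddAbove ((fun t => ‖j (u t) - uσ‖) '' E) := by
    refine ⟨2 * lam, ?_⟩
    rintro y ⟨t, ht, rfl⟩
    exact hval2lam t ht
  have hS2 : S ≤ 2 * lam := csSup_le (hne.image _) (by rintro y ⟨t, ht, rfl⟩; exact hval2lam t ht)
  have hS0 : 0 ≤ S := by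
    obtain ⟨t₀, ht₀⟩ := hne
    exact (norm_nonneg _).trans (le_csSup hbddim (Set.mem_image_of_mem _ ht₀))
  have hSle : ∀ t ∈ E, ‖j (u t) - uσ‖ ≤ S :=
    fun t ht => le_csSup hbddim (Set.mem_image_of_mem _ ht)
  -- the key integral bound
  have key : ∀ ε > (0:ℝ), (∫ t in E, ‖u t‖ ^ p) ≤ (2 * lam - S + ε) ^ p := by
    intro ε hε
    obtain ⟨y, hy, hylt⟩ := exists_lt_of_lt_csSup (hne.image _)
      (show S - ε < S by linarith)
    obtain ⟨t₁, ht₁E, rfl⟩ := hy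
    have ht₁Icc : t₁ ∈ Set.Icc σ T := ⟨ht₁E.1.1.le, ht₁E.1.2⟩
    set β := ⨆ s : Set.Icc σ t₁, ‖j (u (s : ℝ)) - uσ‖ with hβ
    have hβlt : S - ε < β := hylt.trans_le (val_le_su j uσ u hu_cont ht₁Icc)
    have hβle : β ≤ 2 * lam := by
      have := ht₁E.2
      have h0 := lpNormOn_nonneg u (p := p) (σ := σ) t₁
      simp only [hNu] at this; linarith
    -- For t ∈ E with t₁ ≤ t: Fu t ≤ (2λ - β)^p
    have hFub : ∀ t ∈ E, t₁ ≤ t → (∫ s in Set.Ioc σ t, ‖u s‖ ^ p) ≤ (2 * lam - β) ^ p := by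
      intro t ht ht₁t
      rw [← lpNormOn_rpow u hp0 t]
      apply Real.rpow_le_rpow (lpNormOn_nonneg u t) _ hp0.le
      have hsub : β ≤ ⨆ s : Set.Icc σ t, ‖j (u (s : ℝ)) - uσ‖ :=
        su_mono j uσ u hu_cont ht₁t ht.1.2
      have := ht.2
      simp only [hNu] at this
      linarith
    have hFt₁ : (∫ s in Set.Ioc σ t₁, ‖u s‖ ^ p) ≤ (2 * lam - β) ^ p :=
      hFub t₁ ht₁E le_rfl
    -- split E at t₁
    have hEsplit : E = (E ∩ Set.Iic t₁) ∪ (E ∩ Set.Ioi t₁) := by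
      rw [← Set.inter_union_distrib_left, Set.Iic_union_Ioi, Set.inter_univ]
    have hmeas1 : MeasurableSet (E ∩ Set.Iic t₁) := hEm.inter measurableSet_Iic
    have hmeas2 : MeasurableSet (E ∩ Set.Ioi t₁) := hEm.inter measurableSet_Ioi
    have hint1 : IntegrableOn (fun s => ‖u s‖ ^ p) (E ∩ Set.Iic t₁) :=
      hu_int.mono_set (fun x hx => hEs hx.1)
    have hint2 : IntegrableOn (fun s => ‖u s‖ ^ p) (E ∩ Set.Ioi t₁) :=
      hu_int.mono_set (fun x hx => hEs hx.1)
    have hdisj : Disjoint (E ∩ Set.Iic t₁) (E ∩ Set.Ioi t₁) := by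
      apply Set.disjoint_left.mpr
      rintro x ⟨-, hx1⟩ ⟨-, hx2⟩
      exact absurd (Set.mem_Iic.mp hx1) (not_le.mpr hx2)
    have hsplit : (∫ t in E, ‖u t‖ ^ p)
        = (∫ t in E ∩ Set.Iic t₁, ‖u t‖ ^ p) + ∫ t in E ∩ Set.Ioi t₁, ‖u t‖ ^ p := by
      rw [← setIntegral_union hdisj hmeas2 hint1 hint2, ← hEsplit]
    -- bound part 1
    have hb1 : (∫ t in E ∩ Set.Iic t₁, ‖u t‖ ^ p) ≤ ∫ s in Set.Ioc σ t₁, ‖u s‖ ^ p := by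
      apply setIntegral_mono_set (hu_int.mono_set (Set.Ioc_subset_Ioc le_rfl ht₁Icc.2))
        (Filter.Eventually.of_forall hf0)
      apply HasSubset.Subset.eventuallyLE
      rintro x ⟨hxE, hx1⟩
      exact ⟨(hEs hxE).1, hx1⟩
    -- bound part 2 via integral_subset_le based at t₁
    have hb2 : (∫ t in E ∩ Set.Ioi t₁, ‖u t‖ ^ p)
        ≤ (2 * lam - β) ^ p - ∫ s in Set.Ioc σ t₁, ‖u s‖ ^ p := by
      apply integral_subset_le hf0
        (hu_int.mono_set (Set.Ioc_subset_Ioc ht₁E.1.1.le le_rfl)) hmeas2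
        (fun x hx => ⟨hx.2, (hEs hx.1).2⟩) (by linarith)
      intro t ht
      have htE := ht.1
      have ht₁t : t₁ ≤ t := (Set.mem_Ioi.mp ht.2).le
      have hadd : (∫ s in Set.Ioc σ t, ‖u s‖ ^ p)
          = (∫ s in Set.Ioc σ t₁, ‖u s‖ ^ p) + ∫ s in Set.Ioc t₁ t, ‖u s‖ ^ p := by
        rw [← setIntegral_union (Set.Ioc_disjoint_Ioc_of_le le_rfl) measurableSet_Ioc
          (hu_int.mono_set (Set.Ioc_subset_Ioc le_rfl ht₁Icc.2))
          (hu_int.mono_set (Set.Ioc_subset_Ioc ht₁E.1.1.le (hEs htE).2)),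
          Set.Ioc_union_Ioc_eq_Ioc ht₁E.1.1.le ht₁t]
      have := hFub t htE ht₁t
      linarith [hadd ▸ this]
    calc (∫ t in E, ‖u t‖ ^ p) ≤ (2 * lam - β) ^ p := by rw [hsplit]; linarith
      _ ≤ (2 * lam - S + ε) ^ p := by
          apply Real.rpow_le_rpow (by linarith) (by linarith) hp0.le
  -- conclude: (∫_E ‖u‖^p)^(1/p) ≤ 2λ - S
  have hXNN : (0:ℝ) ≤ ∫ t in E, ‖u t‖ ^ p := integral_nonneg hf0
  have hX : (∫ t in E, ‖u t‖ ^ p) ≤ (2 * lam - S) ^ p := by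
    have h1 : ((∫ t in E, ‖u t‖ ^ p) ^ (1/p)) ≤ 2 * lam - S := by
      apply le_of_forall_pos_le_add
      intro ε hε
      calc ((∫ t in E, ‖u t‖ ^ p) ^ (1/p))
          ≤ ((2 * lam - S + ε) ^ p) ^ (1/p) :=
            Real.rpow_le_rpow hXNN (key ε hε) (by positivity)
        _ = 2 * lam - S + ε := by
            rw [← Real.rpow_mul (by linarith), mul_one_div, div_self hp0.ne', Real.rpow_one]
    calc (∫ t in E, ‖u t‖ ^ p) = (((∫ t in E, ‖u t‖ ^ p) ^ (1/p))) ^ p := by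
          rw [← Real.rpow_mul hXNN, one_div, inv_mul_cancel₀ hp0.ne', Real.rpow_one]
      _ ≤ (2 * lam - S) ^ p :=
          Real.rpow_le_rpow (Real.rpow_nonneg hXNN _) h1 hp0.le
  -- final computation
  have hmono : (∫ t in E, (‖j (u t) - uσ‖ * ‖u t‖) ^ p) ≤ S ^ p * ∫ t in E, ‖u t‖ ^ p := by
    rw [← integral_const_mul]
    apply setIntegral_mono_on
    · exact (q_int j uσ u hp0 hu_meas hu_int hu_cont).mono_set hEs |>.mono_measure le_rfl
    · exact (hu_int.mono_set hEs).const_mul _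
    · exact hEm
    · intro t ht
      rw [Real.mul_rpow (norm_nonneg _) (norm_nonneg _)]
      exact mul_le_mul_of_nonneg_right
        (Real.rpow_le_rpow (norm_nonneg _) (hSle t ht) hp0.le)
        (Real.rpow_nonneg (norm_nonneg _) _)
  calc (∫ t in E, (‖j (u t) - uσ‖ * ‖u t‖) ^ p)
      ≤ S ^ p * ((2 * lam - S) ^ p) := by
        refine hmono.trans ?_
        exact mul_le_mul_of_nonneg_left hX (Real.rpow_nonneg hS0 _)
    _ = (S * (2 * lam - S)) ^ p := (Real.mul_rpow hS0 (by linarith)).symm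
    _ ≤ (lam ^ 2) ^ p := by
        apply Real.rpow_le_rpow (mul_nonneg hS0 (by linarith)) _ hp0.le
        nlinarith [sq_nonneg (S - lam)]
end core3

lemma pointwise_bound {E E₁ Ep : Type*}
    [NormedAddCommGroup E] [NormedSpace ℝ E]
    [NormedAddCommGroup E₁] [NormedSpace ℝ E₁]
    [NormedAddCommGroup Ep] [NormedSpace ℝ Ep]
    (A : Ep → (E₁ →L[ℝ] E)) {CQ lam Δ Δs : ℝ} (hCQ : 0 ≤ CQ) (hlam : 0 < lam)
    (hA : ∀ y z : Ep, ‖A z - A y‖ ≤ CQ * ‖z - y‖)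
    (uσ Pu Pv : Ep) (x y : E₁) {a b : ℝ}
    (hPua : ‖Pu - uσ‖ ≤ a) (hab : a ≤ b) (hba : b - a ≤ Δ) (hΔ0 : 0 ≤ Δ)
    (hjj : ‖Pu - Pv‖ ≤ Δs) (hΔs0 : 0 ≤ Δs) :
    ‖cutoffPhi lam a • ((A uσ - A Pu) x) - cutoffPhi lam b • ((A uσ - A Pv) y)‖
      ≤ CQ * ((Δ / lam) * (if a ≤ 2*lam then ‖Pu - uσ‖ * ‖x‖ else 0)
          + lam * ‖x - y‖
          + Δs * (if b ≤ 2*lam then ‖y‖ else 0)) := by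
  set θa := cutoffPhi lam a with hθa
  set θb := cutoffPhi lam b with hθb
  obtain ⟨Bu, hBu⟩ : ∃ B : E₁ →L[ℝ] E, B = A uσ - A Pu := ⟨_, rfl⟩
  obtain ⟨Bv, hBv⟩ : ∃ B : E₁ →L[ℝ] E, B = A uσ - A Pv := ⟨_, rfl⟩
  rw [← hBu, ← hBv]
  have ha0 : 0 ≤ a := (norm_nonneg _).trans hPua
  have hBu_norm : ‖Bu‖ ≤ CQ * ‖Pu - uσ‖ := by
    rw [hBu]
    calc ‖A uσ - A Pu‖ ≤ CQ * ‖uσ - Pu‖ := hA Pu uσ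
      _ = CQ * ‖Pu - uσ‖ := by rw [norm_sub_rev]
  have hBuBv_norm : ‖Bu - Bv‖ ≤ CQ * Δs := by
    have h1 : Bu - Bv = A Pv - A Pu := by rw [hBu, hBv]; abel
    rw [h1]
    calc ‖A Pv - A Pu‖ ≤ CQ * ‖Pv - Pu‖ := hA Pu Pv
      _ = CQ * ‖Pu - Pv‖ := by rw [norm_sub_rev]
      _ ≤ CQ * Δs := by exact mul_le_mul_of_nonneg_left hjj hCQ
  have hid : θa • (Bu x) - θb • (Bv y)
      = (θa - θb) • (Bu x) + θb • (Bu (x - y)) + θb • ((Bu - Bv) y) := by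
    rw [map_sub, ContinuousLinearMap.sub_apply]
    module
  rw [hid]
  have hT1 : ‖(θa - θb) • (Bu x)‖
      ≤ CQ * ((Δ / lam) * (if a ≤ 2*lam then ‖Pu - uσ‖ * ‖x‖ else 0)) := by
    by_cases hc : a ≤ 2*lam
    · rw [if_pos hc, norm_smul, Real.norm_eq_abs]
      have h1 : |θa - θb| ≤ Δ / lam := by
        refine (cutoffPhi_lipschitz hlam a b).trans ?_
        rw [abs_of_nonpos (by linarith)]
        gcongr
        linarith
      have h2 : ‖Bu x‖ ≤ CQ * (‖Pu - uσ‖ * ‖x‖) := by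
        calc ‖Bu x‖ ≤ ‖Bu‖ * ‖x‖ := Bu.le_opNorm x
          _ ≤ (CQ * ‖Pu - uσ‖) * ‖x‖ :=
              mul_le_mul_of_nonneg_right hBu_norm (norm_nonneg _)
          _ = CQ * (‖Pu - uσ‖ * ‖x‖) := by ring
      calc |θa - θb| * ‖Bu x‖ ≤ (Δ / lam) * (CQ * (‖Pu - uσ‖ * ‖x‖)) := by
            apply mul_le_mul h1 h2 (norm_nonneg _) (by positivity)
        _ = CQ * ((Δ / lam) * (‖Pu - uσ‖ * ‖x‖)) := by ring
    · rw [if_neg hc]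
      have hza : θa = 0 := cutoffPhi_eq_zero hlam (by linarith)
      have hzb : θb = 0 := cutoffPhi_eq_zero hlam (by linarith)
      rw [hza, hzb, sub_zero, zero_smul, norm_zero]
      simp
  have hT2 : ‖θb • (Bu (x - y))‖ ≤ CQ * (lam * ‖x - y‖) := by
    rw [norm_smul, Real.norm_eq_abs, abs_of_nonneg (cutoffPhi_nonneg _ _)]
    have key2 : θb * ‖Pu - uσ‖ ≤ lam := by
      calc θb * ‖Pu - uσ‖ ≤ θa * a := by
            apply mul_le_mul (cutoffPhi_antitone hlam hab) hPua (norm_nonneg _)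
              (cutoffPhi_nonneg _ _)
        _ ≤ lam := cutoffPhi_mul_le hlam ha0
    calc θb * ‖Bu (x - y)‖ ≤ θb * ((CQ * ‖Pu - uσ‖) * ‖x - y‖) := by
          apply mul_le_mul_of_nonneg_left _ (cutoffPhi_nonneg _ _)
          exact (Bu.le_opNorm _).trans (mul_le_mul_of_nonneg_right hBu_norm (norm_nonneg _))
      _ = (θb * ‖Pu - uσ‖) * (CQ * ‖x - y‖) := by ring
      _ ≤ lam * (CQ * ‖x - y‖) := by
          apply mul_le_mul_of_nonneg_right key2 (by positivity)
      _ = CQ * (lam * ‖x - y‖) := by ring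
  have hT3 : ‖θb • ((Bu - Bv) y)‖ ≤ CQ * (Δs * (if b ≤ 2*lam then ‖y‖ else 0)) := by
    by_cases hc : b ≤ 2*lam
    · rw [if_pos hc, norm_smul, Real.norm_eq_abs, abs_of_nonneg (cutoffPhi_nonneg _ _)]
      calc θb * ‖(Bu - Bv) y‖ ≤ 1 * ((CQ * Δs) * ‖y‖) := by
            apply mul_le_mul (cutoffPhi_le_one _ _) _ (norm_nonneg _) zero_le_one
            exact ((Bu - Bv).le_opNorm _).trans
              (mul_le_mul_of_nonneg_right hBuBv_norm (norm_nonneg _))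
        _ = CQ * (Δs * ‖y‖) := by ring
    · rw [if_neg hc]
      have hzb : θb = 0 := cutoffPhi_eq_zero hlam (by linarith)
      rw [hzb, zero_smul, norm_zero]
      simp
  calc ‖(θa - θb) • (Bu x) + θb • (Bu (x - y)) + θb • ((Bu - Bv) y)‖
      ≤ ‖(θa - θb) • (Bu x)‖ + ‖θb • (Bu (x - y))‖ + ‖θb • ((Bu - Bv) y)‖ :=
        norm_add₃_le
    _ ≤ CQ * ((Δ / lam) * (if a ≤ 2*lam then ‖Pu - uσ‖ * ‖x‖ else 0))
        + CQ * (lam * ‖x - y‖)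
        + CQ * (Δs * (if b ≤ 2*lam then ‖y‖ else 0)) := by
        exact add_le_add (add_le_add hT1 hT2) hT3
    _ = CQ * ((Δ / lam) * (if a ≤ 2*lam then ‖Pu - uσ‖ * ‖x‖ else 0)
          + lam * ‖x - y‖ + Δs * (if b ≤ 2*lam then ‖y‖ else 0)) := by ring

section more_helpers

lemma two_rpow_bound {x y pe : ℝ} (hx : 0 ≤ x) (hy : 0 ≤ y) (hpe : 0 ≤ pe) :
    (x + y) ^ pe ≤ 2 ^ pe * (x ^ pe + y ^ pe) := by
  have h1 : x + y ≤ 2 * max x y := by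
    rcases max_cases x y with ⟨h, h'⟩ | ⟨h, h'⟩ <;> rw [h] <;> linarith
  calc (x + y) ^ pe ≤ (2 * max x y) ^ pe :=
        Real.rpow_le_rpow (by linarith) h1 hpe
    _ = 2 ^ pe * (max x y) ^ pe := Real.mul_rpow (by norm_num) (le_max_of_le_left hx)
    _ ≤ 2 ^ pe * (x ^ pe + y ^ pe) := by
        apply mul_le_mul_of_nonneg_left _ (Real.rpow_nonneg (by norm_num) _)
        rcases max_cases x y with ⟨h, h'⟩ | ⟨h, h'⟩ <;> rw [h]
        · exact le_add_of_nonneg_right (Real.rpow_nonneg hy _)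
        · exact le_add_of_nonneg_left (Real.rpow_nonneg hx _)

lemma real_rpow_subadd {A B pe : ℝ} (hA : 0 ≤ A) (hB : 0 ≤ B) (hpe : 1 ≤ pe) :
    (A + B) ^ (1/pe) ≤ A ^ (1/pe) + B ^ (1/pe) := by
  have hpe0 : (0:ℝ) < pe := lt_of_lt_of_le one_pos hpe
  lift A to NNReal using hA
  lift B to NNReal using hB
  have h := NNReal.rpow_add_le_add_rpow A B (by positivity : (0:ℝ) ≤ 1/pe)
    (by rw [div_le_one hpe0]; linarith)
  rw [← NNReal.coe_add, ← NNReal.coe_rpow]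
  rw [← NNReal.coe_rpow, ← NNReal.coe_rpow, ← NNReal.coe_add]
  exact_mod_cast h

lemma int_rpow_add {α : Type*} [MeasurableSpace α] {μ : Measure α} {pe : ℝ} (hpe : 0 ≤ pe)
    {f g : α → ℝ} (hf : AEStronglyMeasurable f μ) (hg : AEStronglyMeasurable g μ)
    (hf0 : ∀ x, 0 ≤ f x) (hg0 : ∀ x, 0 ≤ g x)
    (hfi : Integrable (fun x => f x ^ pe) μ) (hgi : Integrable (fun x => g x ^ pe) μ) :
    Integrable (fun x => (f x + g x) ^ pe) μ := by
  have hm : AEStronglyMeasurable (fun x => f x + g x) μ := hf.add hg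
  apply Integrable.mono ((hfi.add hgi).const_mul (2 ^ pe)) (rpow_meas hm hpe)
  filter_upwards with x
  rw [Real.norm_eq_abs, abs_of_nonneg (Real.rpow_nonneg (add_nonneg (hf0 x) (hg0 x)) _)]
  exact (two_rpow_bound (hf0 x) (hg0 x) hpe).trans (le_abs_self _)

lemma int_rpow_cmul {α : Type*} [MeasurableSpace α] {μ : Measure α} {pe c : ℝ} (hc : 0 ≤ c)
    {f : α → ℝ} (hf0 : ∀ x, 0 ≤ f x)
    (hfi : Integrable (fun x => f x ^ pe) μ) :
    Integrable (fun x => (c * f x) ^ pe) μ := by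
  have : (fun x => (c * f x) ^ pe) = fun x => c ^ pe * f x ^ pe := by
    funext x; rw [Real.mul_rpow hc (hf0 x)]
  rw [this]
  exact hfi.const_mul _

lemma const_mul_lp {α : Type*} [MeasurableSpace α] {μ : Measure α} {pe c : ℝ} (hc : 0 ≤ c)
    {f : α → ℝ} (hf0 : ∀ x, 0 ≤ f x) (hpe : 0 < pe) :
    (∫ x, (c * f x) ^ pe ∂μ) ^ (1/pe) = c * (∫ x, f x ^ pe ∂μ) ^ (1/pe) := by
  have h1 : (fun x => (c * f x) ^ pe) = fun x => c ^ pe * f x ^ pe := by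
    funext x; rw [Real.mul_rpow hc (hf0 x)]
  rw [h1, integral_const_mul, Real.mul_rpow (Real.rpow_nonneg hc _)
    (integral_nonneg fun x => Real.rpow_nonneg (hf0 x) _),
    ← Real.rpow_mul hc, mul_one_div, div_self hpe.ne', Real.rpow_one]

lemma lpNormOn_sub_comm {E₁ : Type*} [NormedAddCommGroup E₁] {p σ T : ℝ} (u v : ℝ → E₁) :
    lpNormOn p σ T (fun s => v s - u s) = lpNormOn p σ T (fun s => u s - v s) := by
  unfold lpNormOn
  congr 1
  apply integral_congr_ae
  filter_upwards with s
  rw [norm_sub_rev]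

lemma lp_tri {E₁ : Type*} [NormedAddCommGroup E₁] [NormedSpace ℝ E₁] {p σ T t : ℝ} (hp1 : 1 ≤ p) (ht : t ≤ T)
    {u v : ℝ → E₁}
    (hu_meas : AEStronglyMeasurable u (volume.restrict (Set.Ioc σ T)))
    (hv_meas : AEStronglyMeasurable v (volume.restrict (Set.Ioc σ T)))
    (hu_int : IntegrableOn (fun s => ‖u s‖ ^ p) (Set.Ioc σ T))
    (huv_int : IntegrableOn (fun s => ‖u s - v s‖ ^ p) (Set.Ioc σ T)) :
    lpNormOn p σ t v ≤ lpNormOn p σ t u + lpNormOn p σ T (fun s => u s - v s) := by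
  have hp0 : (0:ℝ) < p := lt_of_lt_of_le one_pos hp1
  have hsub : Set.Ioc σ t ⊆ Set.Ioc σ T := Set.Ioc_subset_Ioc le_rfl ht
  have hres : volume.restrict (Set.Ioc σ t) ≤ volume.restrict (Set.Ioc σ T) :=
    Measure.restrict_mono hsub le_rfl
  have hum : AEStronglyMeasurable (fun s => ‖u s‖) (volume.restrict (Set.Ioc σ t)) :=
    (hu_meas.mono_measure hres).norm
  have huvm : AEStronglyMeasurable (fun s => ‖u s - v s‖) (volume.restrict (Set.Ioc σ t)) :=
    ((hu_meas.mono_measure hres).sub (hv_meas.mono_measure hres)).norm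
  have hui : Integrable (fun s => ‖u s‖ ^ p) (volume.restrict (Set.Ioc σ t)) :=
    hu_int.mono_set hsub
  have huvi : Integrable (fun s => ‖u s - v s‖ ^ p) (volume.restrict (Set.Ioc σ t)) :=
    huv_int.mono_set hsub
  have step1 : (∫ s in Set.Ioc σ t, ‖v s‖ ^ p)
      ≤ ∫ s in Set.Ioc σ t, (‖u s‖ + ‖u s - v s‖) ^ p := by
    apply integral_mono_of_nonneg
    · filter_upwards with s; exact Real.rpow_nonneg (norm_nonneg _) _
    · exact int_rpow_add hp0.le hum huvm (fun s => norm_nonneg _) (fun s => norm_nonneg _)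
        hui huvi
    · filter_upwards with s
      apply Real.rpow_le_rpow (norm_nonneg _) _ hp0.le
      calc ‖v s‖ = ‖u s - (u s - v s)‖ := by rw [sub_sub_cancel]
        _ ≤ ‖u s‖ + ‖u s - v s‖ := norm_sub_le _ _
  calc lpNormOn p σ t v ≤ (∫ s in Set.Ioc σ t, (‖u s‖ + ‖u s - v s‖) ^ p) ^ (1/p) :=
        Real.rpow_le_rpow (integral_nonneg fun s => Real.rpow_nonneg (norm_nonneg _) _)
          step1 (by positivity)
    _ ≤ (∫ s in Set.Ioc σ t, ‖u s‖ ^ p) ^ (1/p)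
        + (∫ s in Set.Ioc σ t, ‖u s - v s‖ ^ p) ^ (1/p) :=
        lp_add_le hp1 hum huvm (fun s => norm_nonneg _) (fun s => norm_nonneg _) hui huvi
    _ ≤ lpNormOn p σ t u + lpNormOn p σ T (fun s => u s - v s) := by
        apply add_le_add le_rfl
        exact Real.rpow_le_rpow
          (integral_nonneg fun s => Real.rpow_nonneg (norm_nonneg _) _)
          (Fu_mono (fun s => u s - v s) hp0 huv_int ht le_rfl) (by positivity)
end more_helpers
/-- Lipschitz estimate for the cut-off quasilinearity. With
`N_u(t) = ‖u‖_{L^p(σ,t;E₁)} + sup_{s∈[σ,t]} ‖j(u(s)) − u_σ‖`,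
`θ_λ(t,u) = Φ_λ(N_u(t))` and `Q(t,u) = θ_λ(t,u) (A(u_σ) − A(j(u(t)))) u(t)`, one has
`( ∫_σ^T ‖Q(t,u) − Q(t,v)‖^p dt )^{1/p}
  ≤ 6 C_Q λ ( ‖u − v‖_{L^p(σ,T;E₁)} + sup_{s∈[σ,T]} ‖j(u(s)) − j(v(s))‖ )`. -/
theorem stmt4
    {E E₁ Ep : Type*}
    [NormedAddCommGroup E] [NormedSpace ℝ E] [CompleteSpace E]
    [NormedAddCommGroup E₁] [NormedSpace ℝ E₁] [CompleteSpace E₁]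
    [NormedAddCommGroup Ep] [NormedSpace ℝ Ep] [CompleteSpace Ep]
    (p σ T : ℝ) (hp : 2 < p) (hσT : σ ≤ T)
    (j : E₁ →L[ℝ] Ep) (hj : Function.Injective j)
    (A : Ep → (E₁ →L[ℝ] E)) (CQ : ℝ) (hCQ : 0 < CQ)
    (hA : ∀ y z : Ep, ‖A z - A y‖ ≤ CQ * ‖z - y‖)
    (uσ : Ep) (lam : ℝ) (hlam : 0 < lam)
    (u v : ℝ → E₁)
    (hu_meas : AEStronglyMeasurable u (volume.restrict (Set.Ioc σ T)))
    (hu_int : IntegrableOn (fun s => ‖u s‖ ^ p) (Set.Ioc σ T))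
    (hu_cont : ContinuousOn (fun t => j (u t)) (Set.Icc σ T))
    (hv_meas : AEStronglyMeasurable v (volume.restrict (Set.Ioc σ T)))
    (hv_int : IntegrableOn (fun s => ‖v s‖ ^ p) (Set.Ioc σ T))
    (hv_cont : ContinuousOn (fun t => j (v t)) (Set.Icc σ T)) :
    (∫ t in Set.Ioc σ T,
        ‖(cutoffPhi lam
                (lpNormOn p σ t u + ⨆ s : Set.Icc σ t, ‖j (u (s : ℝ)) - uσ‖)) •
              ((A uσ - A (j (u t))) (u t)) -
            (cutoffPhi lam
                (lpNormOn p σ t v + ⨆ s : Set.Icc σ t, ‖j (v (s : ℝ)) - uσ‖)) •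
              ((A uσ - A (j (v t))) (v t))‖ ^ p) ^ (1 / p)
      ≤ 6 * CQ * lam *
          (lpNormOn p σ T (fun s => u s - v s) +
            ⨆ s : Set.Icc σ T, ‖j (u (s : ℝ)) - j (v (s : ℝ))‖) := by
  have hp1 : (1:ℝ) ≤ p := by linarith
  have hp0 : (0:ℝ) < p := by linarith
  set ΔL := lpNormOn p σ T (fun s => u s - v s) with hΔLdef
  set Δs := (⨆ s : Set.Icc σ T, ‖j (u (s : ℝ)) - j (v (s : ℝ))‖) with hΔsdef
  have hΔL0 : 0 ≤ ΔL := lpNormOn_nonneg _ _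
  have hΔs0 : 0 ≤ Δs := Real.iSup_nonneg fun _ => norm_nonneg _
  set Δ := ΔL + Δs with hΔdef
  have hΔ0 : 0 ≤ Δ := add_nonneg hΔL0 hΔs0
  -- integrability of the difference
  have hw_meas : AEStronglyMeasurable (fun t => ‖u t - v t‖)
      (volume.restrict (Set.Ioc σ T)) := (hu_meas.sub hv_meas).norm
  have hw0 : ∀ t : ℝ, (0:ℝ) ≤ ‖u t - v t‖ := fun t => norm_nonneg _
  have hw_int : IntegrableOn (fun t => ‖u t - v t‖ ^ p) (Set.Ioc σ T) := by
    apply Integrable.mono ((hu_int.add hv_int).const_mul (2 ^ p))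
      (rpow_meas hw_meas hp0.le)
    filter_upwards with t
    rw [Real.norm_eq_abs, abs_of_nonneg (Real.rpow_nonneg (hw0 t) _)]
    refine le_trans ?_ (le_abs_self _)
    refine le_trans (Real.rpow_le_rpow (hw0 t) (norm_sub_le _ _) hp0.le) ?_
    exact two_rpow_bound (norm_nonneg _) (norm_nonneg _) hp0.le
  -- sup bounds for the difference
  have hbdd_diff : BddAbove (Set.range fun s : Set.Icc σ T =>
      ‖j (u (s : ℝ)) - j (v (s : ℝ))‖) := by
    obtain ⟨Cu, hCu⟩ := isCompact_Icc.exists_bound_of_continuousOn hu_cont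
    obtain ⟨Cv, hCv⟩ := isCompact_Icc.exists_bound_of_continuousOn hv_cont
    refine ⟨|Cu| + |Cv|, ?_⟩
    rintro y ⟨s, rfl⟩
    calc ‖j (u (s:ℝ)) - j (v (s:ℝ))‖ ≤ ‖j (u (s:ℝ))‖ + ‖j (v (s:ℝ))‖ := norm_sub_le _ _
      _ ≤ |Cu| + |Cv| := add_le_add ((hCu _ s.2).trans (le_abs_self _))
          ((hCv _ s.2).trans (le_abs_self _))
  have hjj : ∀ t ∈ Set.Icc σ T, ‖j (u t) - j (v t)‖ ≤ Δs := by
    intro t ht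
    exact le_ciSup hbdd_diff (⟨t, ht⟩ : Set.Icc σ T)
  -- triangle bounds for N
  have hNdiff1 : ∀ t ∈ Set.Ioc σ T,
      (lpNormOn p σ t v + ⨆ s : Set.Icc σ t, ‖j (v (s : ℝ)) - uσ‖)
      ≤ (lpNormOn p σ t u + ⨆ s : Set.Icc σ t, ‖j (u (s : ℝ)) - uσ‖) + Δ := by
    intro t ht
    have h1 : lpNormOn p σ t v ≤ lpNormOn p σ t u + ΔL :=
      lp_tri hp1 ht.2 hu_meas hv_meas hu_int hw_int
    have h2 : (⨆ s : Set.Icc σ t, ‖j (v (s : ℝ)) - uσ‖)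
        ≤ (⨆ s : Set.Icc σ t, ‖j (u (s : ℝ)) - uσ‖) + Δs := by
      have hne : Nonempty (Set.Icc σ t) := ⟨⟨σ, le_rfl, ht.1.le⟩⟩
      refine ciSup_le fun s => ?_
      have hsT : (s : ℝ) ∈ Set.Icc σ T := ⟨s.2.1, s.2.2.trans ht.2⟩
      calc ‖j (v (s:ℝ)) - uσ‖ ≤ ‖j (u (s:ℝ)) - uσ‖ + ‖j (u (s:ℝ)) - j (v (s:ℝ))‖ := by
            have he : j (v (s:ℝ)) - uσ
                = (j (u (s:ℝ)) - uσ) - (j (u (s:ℝ)) - j (v (s:ℝ))) := by abel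
            rw [he]; exact norm_sub_le _ _
        _ ≤ (⨆ s' : Set.Icc σ t, ‖j (u (s' : ℝ)) - uσ‖) + Δs :=
            add_le_add (le_ciSup (bdd_range j uσ u hu_cont ht.2) s) (hjj _ hsT)
    rw [hΔdef]; linarith
  have hNdiff2 : ∀ t ∈ Set.Ioc σ T,
      (lpNormOn p σ t u + ⨆ s : Set.Icc σ t, ‖j (u (s : ℝ)) - uσ‖)
      ≤ (lpNormOn p σ t v + ⨆ s : Set.Icc σ t, ‖j (v (s : ℝ)) - uσ‖) + Δ := by
    intro t ht
    have hwv_int : IntegrableOn (fun s => ‖v s - u s‖ ^ p) (Set.Ioc σ T) := by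
      have he : (fun s => ‖v s - u s‖ ^ p) = fun s => ‖u s - v s‖ ^ p := by
        funext s; rw [norm_sub_rev]
      rw [he]; exact hw_int
    have h1 : lpNormOn p σ t u ≤ lpNormOn p σ t v + ΔL := by
      have := lp_tri hp1 ht.2 hv_meas hu_meas hv_int hwv_int
      rwa [lpNormOn_sub_comm] at this
    have h2 : (⨆ s : Set.Icc σ t, ‖j (u (s : ℝ)) - uσ‖)
        ≤ (⨆ s : Set.Icc σ t, ‖j (v (s : ℝ)) - uσ‖) + Δs := by
      have hne : Nonempty (Set.Icc σ t) := ⟨⟨σ, le_rfl, ht.1.le⟩⟩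
      refine ciSup_le fun s => ?_
      have hsT : (s : ℝ) ∈ Set.Icc σ T := ⟨s.2.1, s.2.2.trans ht.2⟩
      calc ‖j (u (s:ℝ)) - uσ‖ ≤ ‖j (v (s:ℝ)) - uσ‖ + ‖j (u (s:ℝ)) - j (v (s:ℝ))‖ := by
            have he : j (u (s:ℝ)) - uσ
                = (j (v (s:ℝ)) - uσ) + (j (u (s:ℝ)) - j (v (s:ℝ))) := by abel
            rw [he]; exact norm_add_le _ _
        _ ≤ (⨆ s' : Set.Icc σ t, ‖j (v (s' : ℝ)) - uσ‖) + Δs :=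
            add_le_add (le_ciSup (bdd_range j uσ v hv_cont ht.2) s) (hjj _ hsT)
    rw [hΔdef]; linarith
  -- the cut-off sets
  set Eu := {t | t ∈ Set.Ioc σ T ∧
      lpNormOn p σ t u + (⨆ s : Set.Icc σ t, ‖j (u (s : ℝ)) - uσ‖) ≤ 2 * lam} with hEu
  set Ev := {t | t ∈ Set.Ioc σ T ∧
      lpNormOn p σ t v + (⨆ s : Set.Icc σ t, ‖j (v (s : ℝ)) - uσ‖) ≤ 2 * lam} with hEv
  have hEum : MeasurableSet Eu := by
    rw [hEu]; exact Nu_measurable j uσ u hp0 hu_int hu_cont _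
  have hEvm : MeasurableSet Ev := by
    rw [hEv]; exact Nu_measurable j uσ v hp0 hv_int hv_cont _
  have hEus : Eu ⊆ Set.Ioc σ T := fun t ht => ht.1
  have hEvs : Ev ⊆ Set.Ioc σ T := fun t ht => ht.1
  -- the comparison functions
  set qu := Eu.indicator (fun t => ‖j (u t) - uσ‖ * ‖u t‖) with hqu
  set gu := Eu.indicator (fun t => ‖u t‖) with hgu
  set qv := Ev.indicator (fun t => ‖j (v t) - uσ‖ * ‖v t‖) with hqv
  set gv := Ev.indicator (fun t => ‖v t‖) with hgv
  have hqu0 : ∀ t, 0 ≤ qu t := fun t =>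
    Set.indicator_nonneg (fun y _ => mul_nonneg (norm_nonneg _) (norm_nonneg _)) t
  have hgu0 : ∀ t, 0 ≤ gu t := fun t => Set.indicator_nonneg (fun y _ => norm_nonneg _) t
  have hqv0 : ∀ t, 0 ≤ qv t := fun t =>
    Set.indicator_nonneg (fun y _ => mul_nonneg (norm_nonneg _) (norm_nonneg _)) t
  have hgv0 : ∀ t, 0 ≤ gv t := fun t => Set.indicator_nonneg (fun y _ => norm_nonneg _) t
  -- measurability
  have hqum : AEStronglyMeasurable qu (volume.restrict (Set.Ioc σ T)) :=
    (q_meas j uσ u hu_meas).indicator hEum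
  have hqvm : AEStronglyMeasurable qv (volume.restrict (Set.Ioc σ T)) :=
    (q_meas j uσ v hv_meas).indicator hEvm
  have hgum : AEStronglyMeasurable gu (volume.restrict (Set.Ioc σ T)) :=
    hu_meas.norm.indicator hEum
  have hgvm : AEStronglyMeasurable gv (volume.restrict (Set.Ioc σ T)) :=
    hv_meas.norm.indicator hEvm
  -- integrability of p-th powers
  have hind_rpow : ∀ (S : Set ℝ) (f : ℝ → ℝ),
      (fun t => (S.indicator f t) ^ p) = S.indicator (fun t => f t ^ p) := by
    intro S f
    funext t
    by_cases ht : t ∈ S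
    · rw [Set.indicator_of_mem ht, Set.indicator_of_mem ht]
    · rw [Set.indicator_of_notMem ht, Set.indicator_of_notMem ht,
        Real.zero_rpow hp0.ne']
  have hqup_int : IntegrableOn (fun t => qu t ^ p) (Set.Ioc σ T) := by
    rw [hqu, hind_rpow]
    exact (q_int j uσ u hp0 hu_meas hu_int hu_cont).indicator hEum
  have hqvp_int : IntegrableOn (fun t => qv t ^ p) (Set.Ioc σ T) := by
    rw [hqv, hind_rpow]
    exact (q_int j uσ v hp0 hv_meas hv_int hv_cont).indicator hEvm
  have hgup_int : IntegrableOn (fun t => gu t ^ p) (Set.Ioc σ T) := by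
    rw [hgu, hind_rpow]
    exact hu_int.indicator hEum
  have hgvp_int : IntegrableOn (fun t => gv t ^ p) (Set.Ioc σ T) := by
    rw [hgv, hind_rpow]
    exact hv_int.indicator hEvm
    -- X and Y comparison functions
  set X : ℝ → ℝ := fun t => CQ * ((Δ / lam) * qu t + lam * ‖u t - v t‖ + Δs * gv t) with hX
  set Y : ℝ → ℝ := fun t => CQ * ((Δ / lam) * qv t + lam * ‖u t - v t‖ + Δs * gu t) with hY
  have hX0 : ∀ t, 0 ≤ X t := fun t =>
    mul_nonneg hCQ.le (add_nonneg (add_nonneg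
      (mul_nonneg (div_nonneg hΔ0 hlam.le) (hqu0 t)) (mul_nonneg hlam.le (hw0 t)))
      (mul_nonneg hΔs0 (hgv0 t)))
  have hY0 : ∀ t, 0 ≤ Y t := fun t =>
    mul_nonneg hCQ.le (add_nonneg (add_nonneg
      (mul_nonneg (div_nonneg hΔ0 hlam.le) (hqv0 t)) (mul_nonneg hlam.le (hw0 t)))
      (mul_nonneg hΔs0 (hgu0 t)))
  -- pointwise bound
  have hpoint : ∀ t ∈ Set.Ioc σ T,
      ‖(cutoffPhi lam
            (lpNormOn p σ t u + ⨆ s : Set.Icc σ t, ‖j (u (s : ℝ)) - uσ‖)) •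
          ((A uσ - A (j (u t))) (u t)) -
        (cutoffPhi lam
            (lpNormOn p σ t v + ⨆ s : Set.Icc σ t, ‖j (v (s : ℝ)) - uσ‖)) •
          ((A uσ - A (j (v t))) (v t))‖ ^ p ≤ X t ^ p + Y t ^ p := by
    intro t ht
    have htIcc : t ∈ Set.Icc σ T := ⟨ht.1.le, ht.2⟩
    have hPua : ‖j (u t) - uσ‖
        ≤ lpNormOn p σ t u + ⨆ s : Set.Icc σ t, ‖j (u (s : ℝ)) - uσ‖ :=
      (val_le_su j uσ u hu_cont htIcc).trans (le_add_of_nonneg_left (lpNormOn_nonneg u t))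
    have hPva : ‖j (v t) - uσ‖
        ≤ lpNormOn p σ t v + ⨆ s : Set.Icc σ t, ‖j (v (s : ℝ)) - uσ‖ :=
      (val_le_su j uσ v hv_cont htIcc).trans (le_add_of_nonneg_left (lpNormOn_nonneg v t))
    have equ : (if (lpNormOn p σ t u + ⨆ s : Set.Icc σ t, ‖j (u (s : ℝ)) - uσ‖) ≤ 2*lam
        then ‖j (u t) - uσ‖ * ‖u t‖ else 0) = qu t := by
      by_cases hc : (lpNormOn p σ t u + ⨆ s : Set.Icc σ t, ‖j (u (s : ℝ)) - uσ‖) ≤ 2*lam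
      · rw [if_pos hc, hqu, Set.indicator_of_mem (by exact ⟨ht, hc⟩)]
      · rw [if_neg hc, hqu, Set.indicator_of_notMem (fun hmem => hc hmem.2)]
    have egu : (if (lpNormOn p σ t u + ⨆ s : Set.Icc σ t, ‖j (u (s : ℝ)) - uσ‖) ≤ 2*lam
        then ‖u t‖ else 0) = gu t := by
      by_cases hc : (lpNormOn p σ t u + ⨆ s : Set.Icc σ t, ‖j (u (s : ℝ)) - uσ‖) ≤ 2*lam
      · rw [if_pos hc, hgu, Set.indicator_of_mem (by exact ⟨ht, hc⟩)]
      · rw [if_neg hc, hgu, Set.indicator_of_notMem (fun hmem => hc hmem.2)]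
    have eqv : (if (lpNormOn p σ t v + ⨆ s : Set.Icc σ t, ‖j (v (s : ℝ)) - uσ‖) ≤ 2*lam
        then ‖j (v t) - uσ‖ * ‖v t‖ else 0) = qv t := by
      by_cases hc : (lpNormOn p σ t v + ⨆ s : Set.Icc σ t, ‖j (v (s : ℝ)) - uσ‖) ≤ 2*lam
      · rw [if_pos hc, hqv, Set.indicator_of_mem (by exact ⟨ht, hc⟩)]
      · rw [if_neg hc, hqv, Set.indicator_of_notMem (fun hmem => hc hmem.2)]
    have egv : (if (lpNormOn p σ t v + ⨆ s : Set.Icc σ t, ‖j (v (s : ℝ)) - uσ‖) ≤ 2*lam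
        then ‖v t‖ else 0) = gv t := by
      by_cases hc : (lpNormOn p σ t v + ⨆ s : Set.Icc σ t, ‖j (v (s : ℝ)) - uσ‖) ≤ 2*lam
      · rw [if_pos hc, hgv, Set.indicator_of_mem (by exact ⟨ht, hc⟩)]
      · rw [if_neg hc, hgv, Set.indicator_of_notMem (fun hmem => hc hmem.2)]
    rcases le_total
        (lpNormOn p σ t u + ⨆ s : Set.Icc σ t, ‖j (u (s : ℝ)) - uσ‖)
        (lpNormOn p σ t v + ⨆ s : Set.Icc σ t, ‖j (v (s : ℝ)) - uσ‖) with hc | hc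
    · have hb := pointwise_bound A hCQ.le hlam hA uσ (j (u t)) (j (v t)) (u t) (v t)
        hPua hc (by linarith [hNdiff1 t ht]) hΔ0 (hjj t htIcc) hΔs0
      rw [equ, egv] at hb
      have h1 : X t ^ p ≤ X t ^ p + Y t ^ p :=
        le_add_of_nonneg_right (Real.rpow_nonneg (hY0 t) _)
      refine le_trans ?_ h1
      exact Real.rpow_le_rpow (norm_nonneg _) hb hp0.le
    · have hjj' : ‖j (v t) - j (u t)‖ ≤ Δs := by
        rw [norm_sub_rev]; exact hjj t htIcc
      have hb := pointwise_bound A hCQ.le hlam hA uσ (j (v t)) (j (u t)) (v t) (u t)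
        hPva hc (by linarith [hNdiff2 t ht]) hΔ0 hjj' hΔs0
      rw [eqv, egu] at hb
      have hvu : ‖v t - u t‖ = ‖u t - v t‖ := norm_sub_rev _ _
      rw [hvu] at hb
      have hrev : ‖(cutoffPhi lam
            (lpNormOn p σ t u + ⨆ s : Set.Icc σ t, ‖j (u (s : ℝ)) - uσ‖)) •
          ((A uσ - A (j (u t))) (u t)) -
        (cutoffPhi lam
            (lpNormOn p σ t v + ⨆ s : Set.Icc σ t, ‖j (v (s : ℝ)) - uσ‖)) •
          ((A uσ - A (j (v t))) (v t))‖
          = ‖(cutoffPhi lam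
            (lpNormOn p σ t v + ⨆ s : Set.Icc σ t, ‖j (v (s : ℝ)) - uσ‖)) •
          ((A uσ - A (j (v t))) (v t)) -
        (cutoffPhi lam
            (lpNormOn p σ t u + ⨆ s : Set.Icc σ t, ‖j (u (s : ℝ)) - uσ‖)) •
          ((A uσ - A (j (u t))) (u t))‖ := norm_sub_rev _ _
      rw [hrev]
      have h1 : Y t ^ p ≤ X t ^ p + Y t ^ p :=
        le_add_of_nonneg_left (Real.rpow_nonneg (hX0 t) _)
      refine le_trans ?_ h1
      exact Real.rpow_le_rpow (norm_nonneg _) hb hp0.le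
    -- integrability of X^p and Y^p pieces
  have hf1m : AEStronglyMeasurable (fun t => (Δ/lam) * qu t)
      (volume.restrict (Set.Ioc σ T)) := hqum.const_mul _
  have hf2m : AEStronglyMeasurable (fun t => lam * ‖u t - v t‖)
      (volume.restrict (Set.Ioc σ T)) := hw_meas.const_mul _
  have hf3m : AEStronglyMeasurable (fun t => Δs * gv t)
      (volume.restrict (Set.Ioc σ T)) := hgvm.const_mul _
  have hg1m : AEStronglyMeasurable (fun t => (Δ/lam) * qv t)
      (volume.restrict (Set.Ioc σ T)) := hqvm.const_mul _
  have hg3m : AEStronglyMeasurable (fun t => Δs * gu t)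
      (volume.restrict (Set.Ioc σ T)) := hgum.const_mul _
  have hf10 : ∀ t, 0 ≤ (Δ/lam) * qu t := fun t =>
    mul_nonneg (div_nonneg hΔ0 hlam.le) (hqu0 t)
  have hf20 : ∀ t, 0 ≤ lam * ‖u t - v t‖ := fun t => mul_nonneg hlam.le (hw0 t)
  have hf30 : ∀ t, 0 ≤ Δs * gv t := fun t => mul_nonneg hΔs0 (hgv0 t)
  have hg10 : ∀ t, 0 ≤ (Δ/lam) * qv t := fun t =>
    mul_nonneg (div_nonneg hΔ0 hlam.le) (hqv0 t)
  have hg30 : ∀ t, 0 ≤ Δs * gu t := fun t => mul_nonneg hΔs0 (hgu0 t)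
  have hf1i : Integrable (fun t => ((Δ/lam) * qu t) ^ p) (volume.restrict (Set.Ioc σ T)) :=
    int_rpow_cmul (div_nonneg hΔ0 hlam.le) hqu0 hqup_int
  have hf2i : Integrable (fun t => (lam * ‖u t - v t‖) ^ p)
      (volume.restrict (Set.Ioc σ T)) := int_rpow_cmul hlam.le hw0 hw_int
  have hf3i : Integrable (fun t => (Δs * gv t) ^ p) (volume.restrict (Set.Ioc σ T)) :=
    int_rpow_cmul hΔs0 hgv0 hgvp_int
  have hg1i : Integrable (fun t => ((Δ/lam) * qv t) ^ p) (volume.restrict (Set.Ioc σ T)) :=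
    int_rpow_cmul (div_nonneg hΔ0 hlam.le) hqv0 hqvp_int
  have hg3i : Integrable (fun t => (Δs * gu t) ^ p) (volume.restrict (Set.Ioc σ T)) :=
    int_rpow_cmul hΔs0 hgu0 hgup_int
  have hf12m : AEStronglyMeasurable (fun t => (Δ/lam) * qu t + lam * ‖u t - v t‖)
      (volume.restrict (Set.Ioc σ T)) := hf1m.add hf2m
  have hg12m : AEStronglyMeasurable (fun t => (Δ/lam) * qv t + lam * ‖u t - v t‖)
      (volume.restrict (Set.Ioc σ T)) := hg1m.add hf2m
  have hf12i : Integrable (fun t => ((Δ/lam) * qu t + lam * ‖u t - v t‖) ^ p)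
      (volume.restrict (Set.Ioc σ T)) :=
    int_rpow_add hp0.le hf1m hf2m hf10 hf20 hf1i hf2i
  have hg12i : Integrable (fun t => ((Δ/lam) * qv t + lam * ‖u t - v t‖) ^ p)
      (volume.restrict (Set.Ioc σ T)) :=
    int_rpow_add hp0.le hg1m hf2m hg10 hf20 hg1i hf2i
  have hf120 : ∀ t, 0 ≤ (Δ/lam) * qu t + lam * ‖u t - v t‖ := fun t =>
    add_nonneg (hf10 t) (hf20 t)
  have hg120 : ∀ t, 0 ≤ (Δ/lam) * qv t + lam * ‖u t - v t‖ := fun t =>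
    add_nonneg (hg10 t) (hf20 t)
  have hFX0 : ∀ t, 0 ≤ (Δ/lam) * qu t + lam * ‖u t - v t‖ + Δs * gv t := fun t =>
    add_nonneg (hf120 t) (hf30 t)
  have hFY0 : ∀ t, 0 ≤ (Δ/lam) * qv t + lam * ‖u t - v t‖ + Δs * gu t := fun t =>
    add_nonneg (hg120 t) (hg30 t)
  have hFXi : Integrable (fun t => ((Δ/lam) * qu t + lam * ‖u t - v t‖ + Δs * gv t) ^ p)
      (volume.restrict (Set.Ioc σ T)) :=
    int_rpow_add hp0.le hf12m hf3m hf120 hf30 hf12i hf3i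
  have hFYi : Integrable (fun t => ((Δ/lam) * qv t + lam * ‖u t - v t‖ + Δs * gu t) ^ p)
      (volume.restrict (Set.Ioc σ T)) :=
    int_rpow_add hp0.le hg12m hg3m hg120 hg30 hg12i hg3i
  have hXp_int : Integrable (fun t => X t ^ p) (volume.restrict (Set.Ioc σ T)) := by
    simp only [hX]
    exact int_rpow_cmul hCQ.le hFX0 hFXi
  have hYp_int : Integrable (fun t => Y t ^ p) (volume.restrict (Set.Ioc σ T)) := by
    simp only [hY]
    exact int_rpow_cmul hCQ.le hFY0 hFYi
  -- component Lp bounds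
  have hrpow_cancel : ∀ c : ℝ, 0 ≤ c → (c ^ p) ^ (1/p) = c := by
    intro c hc
    rw [← Real.rpow_mul hc, mul_one_div, div_self hp0.ne', Real.rpow_one]
  have hqu_lp : (∫ t in Set.Ioc σ T, qu t ^ p) ^ (1/p) ≤ lam^2 := by
    have h1 : (∫ t in Set.Ioc σ T, qu t ^ p)
        = ∫ t in Eu, (‖j (u t) - uσ‖ * ‖u t‖) ^ p := by
      rw [hqu, hind_rpow, integral_indicator hEum, Measure.restrict_restrict hEum,
        Set.inter_eq_left.mpr hEus]
    have h2 := core_b j uσ u hp1 hσT hlam hu_meas hu_int hu_cont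
    rw [← hEu] at h2
    calc (∫ t in Set.Ioc σ T, qu t ^ p) ^ (1/p) ≤ ((lam^2) ^ p) ^ (1/p) := by
          apply Real.rpow_le_rpow (integral_nonneg fun t => Real.rpow_nonneg (hqu0 t) _)
            _ (by positivity)
          rw [h1]; exact h2
      _ = lam^2 := hrpow_cancel _ (by positivity)
  have hqv_lp : (∫ t in Set.Ioc σ T, qv t ^ p) ^ (1/p) ≤ lam^2 := by
    have h1 : (∫ t in Set.Ioc σ T, qv t ^ p)
        = ∫ t in Ev, (‖j (v t) - uσ‖ * ‖v t‖) ^ p := by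
      rw [hqv, hind_rpow, integral_indicator hEvm, Measure.restrict_restrict hEvm,
        Set.inter_eq_left.mpr hEvs]
    have h2 := core_b j uσ v hp1 hσT hlam hv_meas hv_int hv_cont
    rw [← hEv] at h2
    calc (∫ t in Set.Ioc σ T, qv t ^ p) ^ (1/p) ≤ ((lam^2) ^ p) ^ (1/p) := by
          apply Real.rpow_le_rpow (integral_nonneg fun t => Real.rpow_nonneg (hqv0 t) _)
            _ (by positivity)
          rw [h1]; exact h2
      _ = lam^2 := hrpow_cancel _ (by positivity)
  have hgu_lp : (∫ t in Set.Ioc σ T, gu t ^ p) ^ (1/p) ≤ 2*lam := by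
    have h1 : (∫ t in Set.Ioc σ T, gu t ^ p) = ∫ t in Eu, ‖u t‖ ^ p := by
      rw [hgu, hind_rpow, integral_indicator hEum, Measure.restrict_restrict hEum,
        Set.inter_eq_left.mpr hEus]
    have h2 := core_a j uσ u hp1 hσT hlam hu_int hu_cont
    rw [← hEu] at h2
    calc (∫ t in Set.Ioc σ T, gu t ^ p) ^ (1/p) ≤ ((2*lam) ^ p) ^ (1/p) := by
          apply Real.rpow_le_rpow (integral_nonneg fun t => Real.rpow_nonneg (hgu0 t) _)
            _ (by positivity)
          rw [h1]; exact h2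
      _ = 2*lam := hrpow_cancel _ (by positivity)
  have hgv_lp : (∫ t in Set.Ioc σ T, gv t ^ p) ^ (1/p) ≤ 2*lam := by
    have h1 : (∫ t in Set.Ioc σ T, gv t ^ p) = ∫ t in Ev, ‖v t‖ ^ p := by
      rw [hgv, hind_rpow, integral_indicator hEvm, Measure.restrict_restrict hEvm,
        Set.inter_eq_left.mpr hEvs]
    have h2 := core_a j uσ v hp1 hσT hlam hv_int hv_cont
    rw [← hEv] at h2
    calc (∫ t in Set.Ioc σ T, gv t ^ p) ^ (1/p) ≤ ((2*lam) ^ p) ^ (1/p) := by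
          apply Real.rpow_le_rpow (integral_nonneg fun t => Real.rpow_nonneg (hgv0 t) _)
            _ (by positivity)
          rw [h1]; exact h2
      _ = 2*lam := hrpow_cancel _ (by positivity)
  have hw_lp : (∫ t in Set.Ioc σ T, ‖u t - v t‖ ^ p) ^ (1/p) = ΔL := by
    rw [hΔLdef]; rfl
  -- Minkowski for X
  have hXlp : (∫ t in Set.Ioc σ T, X t ^ p) ^ (1/p)
      ≤ CQ * (Δ * lam + lam * ΔL + Δs * (2*lam)) := by
    calc (∫ t in Set.Ioc σ T, X t ^ p) ^ (1/p)
        = CQ * (∫ t in Set.Ioc σ T,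
            ((Δ/lam) * qu t + lam * ‖u t - v t‖ + Δs * gv t) ^ p) ^ (1/p) := by
          simp only [hX]
          exact const_mul_lp hCQ.le hFX0 hp0
      _ ≤ CQ * ((∫ t in Set.Ioc σ T,
            ((Δ/lam) * qu t + lam * ‖u t - v t‖) ^ p) ^ (1/p)
          + (∫ t in Set.Ioc σ T, (Δs * gv t) ^ p) ^ (1/p)) := by
          apply mul_le_mul_of_nonneg_left _ hCQ.le
          exact lp_add_le hp1 hf12m hf3m hf120 hf30 hf12i hf3i
      _ ≤ CQ * (((∫ t in Set.Ioc σ T, ((Δ/lam) * qu t) ^ p) ^ (1/p)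
          + (∫ t in Set.Ioc σ T, (lam * ‖u t - v t‖) ^ p) ^ (1/p))
          + (∫ t in Set.Ioc σ T, (Δs * gv t) ^ p) ^ (1/p)) := by
          apply mul_le_mul_of_nonneg_left _ hCQ.le
          apply add_le_add _ le_rfl
          exact lp_add_le hp1 hf1m hf2m hf10 hf20 hf1i hf2i
      _ ≤ CQ * (((Δ/lam) * lam^2 + lam * ΔL) + Δs * (2*lam)) := by
          apply mul_le_mul_of_nonneg_left _ hCQ.le
          apply add_le_add (add_le_add ?_ ?_) ?_
          · rw [const_mul_lp (div_nonneg hΔ0 hlam.le) hqu0 hp0]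
            exact mul_le_mul_of_nonneg_left hqu_lp (div_nonneg hΔ0 hlam.le)
          · rw [const_mul_lp hlam.le hw0 hp0, hw_lp]
          · rw [const_mul_lp hΔs0 hgv0 hp0]
            exact mul_le_mul_of_nonneg_left hgv_lp hΔs0
      _ = CQ * (Δ * lam + lam * ΔL + Δs * (2*lam)) := by
          have : (Δ/lam) * lam^2 = Δ * lam := by field_simp
          rw [this]
  have hYlp : (∫ t in Set.Ioc σ T, Y t ^ p) ^ (1/p)
      ≤ CQ * (Δ * lam + lam * ΔL + Δs * (2*lam)) := by
    calc (∫ t in Set.Ioc σ T, Y t ^ p) ^ (1/p)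
        = CQ * (∫ t in Set.Ioc σ T,
            ((Δ/lam) * qv t + lam * ‖u t - v t‖ + Δs * gu t) ^ p) ^ (1/p) := by
          simp only [hY]
          exact const_mul_lp hCQ.le hFY0 hp0
      _ ≤ CQ * ((∫ t in Set.Ioc σ T,
            ((Δ/lam) * qv t + lam * ‖u t - v t‖) ^ p) ^ (1/p)
          + (∫ t in Set.Ioc σ T, (Δs * gu t) ^ p) ^ (1/p)) := by
          apply mul_le_mul_of_nonneg_left _ hCQ.le
          exact lp_add_le hp1 hg12m hg3m hg120 hg30 hg12i hg3i
      _ ≤ CQ * (((∫ t in Set.Ioc σ T, ((Δ/lam) * qv t) ^ p) ^ (1/p)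
          + (∫ t in Set.Ioc σ T, (lam * ‖u t - v t‖) ^ p) ^ (1/p))
          + (∫ t in Set.Ioc σ T, (Δs * gu t) ^ p) ^ (1/p)) := by
          apply mul_le_mul_of_nonneg_left _ hCQ.le
          apply add_le_add _ le_rfl
          exact lp_add_le hp1 hg1m hf2m hg10 hf20 hg1i hf2i
      _ ≤ CQ * (((Δ/lam) * lam^2 + lam * ΔL) + Δs * (2*lam)) := by
          apply mul_le_mul_of_nonneg_left _ hCQ.le
          apply add_le_add (add_le_add ?_ ?_) ?_
          · rw [const_mul_lp (div_nonneg hΔ0 hlam.le) hqv0 hp0]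
            exact mul_le_mul_of_nonneg_left hqv_lp (div_nonneg hΔ0 hlam.le)
          · rw [const_mul_lp hlam.le hw0 hp0, hw_lp]
          · rw [const_mul_lp hΔs0 hgu0 hp0]
            exact mul_le_mul_of_nonneg_left hgu_lp hΔs0
      _ = CQ * (Δ * lam + lam * ΔL + Δs * (2*lam)) := by
          have : (Δ/lam) * lam^2 = Δ * lam := by field_simp
          rw [this]
  -- the main comparison
  have main1 : (∫ t in Set.Ioc σ T,
      ‖(cutoffPhi lam
            (lpNormOn p σ t u + ⨆ s : Set.Icc σ t, ‖j (u (s : ℝ)) - uσ‖)) •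
          ((A uσ - A (j (u t))) (u t)) -
        (cutoffPhi lam
            (lpNormOn p σ t v + ⨆ s : Set.Icc σ t, ‖j (v (s : ℝ)) - uσ‖)) •
          ((A uσ - A (j (v t))) (v t))‖ ^ p)
      ≤ (∫ t in Set.Ioc σ T, X t ^ p) + ∫ t in Set.Ioc σ T, Y t ^ p := by
    rw [← integral_add hXp_int hYp_int]
    apply integral_mono_of_nonneg
    · filter_upwards with t
      exact Real.rpow_nonneg (norm_nonneg _) _
    · exact hXp_int.add hYp_int
    · filter_upwards [ae_restrict_mem measurableSet_Ioc] with t ht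
      exact hpoint t ht
  -- conclusion
  have hXint0 : 0 ≤ ∫ t in Set.Ioc σ T, X t ^ p :=
    integral_nonneg fun t => Real.rpow_nonneg (hX0 t) _
  have hYint0 : 0 ≤ ∫ t in Set.Ioc σ T, Y t ^ p :=
    integral_nonneg fun t => Real.rpow_nonneg (hY0 t) _
  calc (∫ t in Set.Ioc σ T,
      ‖(cutoffPhi lam
            (lpNormOn p σ t u + ⨆ s : Set.Icc σ t, ‖j (u (s : ℝ)) - uσ‖)) •
          ((A uσ - A (j (u t))) (u t)) -
        (cutoffPhi lam
            (lpNormOn p σ t v + ⨆ s : Set.Icc σ t, ‖j (v (s : ℝ)) - uσ‖)) •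
          ((A uσ - A (j (v t))) (v t))‖ ^ p) ^ (1/p)
      ≤ ((∫ t in Set.Ioc σ T, X t ^ p) + ∫ t in Set.Ioc σ T, Y t ^ p) ^ (1/p) := by
        apply Real.rpow_le_rpow _ main1 (by positivity)
        exact integral_nonneg fun t => Real.rpow_nonneg (norm_nonneg _) _
    _ ≤ (∫ t in Set.Ioc σ T, X t ^ p) ^ (1/p)
        + (∫ t in Set.Ioc σ T, Y t ^ p) ^ (1/p) :=
        real_rpow_subadd hXint0 hYint0 hp1
    _ ≤ CQ * (Δ * lam + lam * ΔL + Δs * (2*lam))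
        + CQ * (Δ * lam + lam * ΔL + Δs * (2*lam)) := add_le_add hXlp hYlp
    _ ≤ 6 * CQ * lam * (ΔL + Δs) := by
        rw [hΔdef]
        nlinarith [mul_nonneg (mul_nonneg hCQ.le hlam.le) hΔL0]
end

section
/- With the notation of the cut-off construction below, for all strongly measurable u, v : [σ,T] → E₁ with ‖u‖_{L^p(σ,T;E₁)} < ∞, ‖v‖_{L^p(σ,T;E₁)} < ∞ and with j∘u, j∘v : [σ,T] → E_p continuous, and for every t ∈ [σ,T], one has | θ_λ(t,u) − θ_λ(t,v) | ≤ λ^{-1} · ( ‖u − v‖_{L^p(σ,T;E₁)} + sup_{s∈[σ,T]} ‖j(u(s)) − j(v(s))‖_{E_p} ). -/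
open MeasureTheory
open scoped ENNReal NNReal

lemma cutoffPhi_lip (lam : ℝ) (hlam : 0 < lam) (a b : ℝ) :
    |cutoffPhi lam a - cutoffPhi lam b| ≤ |a - b| / lam := by
  unfold cutoffPhi
  rw [max_comm 0 (min 1 (2 - a / lam)), max_comm 0 (min 1 (2 - b / lam))]
  refine (abs_max_sub_max_le_abs _ _ 0).trans ?_
  refine (abs_min_sub_min_le_max 1 (2 - a / lam) 1 (2 - b / lam)).trans (le_of_eq ?_)
  rw [sub_self, abs_zero, show (2 - a / lam) - (2 - b / lam) = (b - a)/lam by ring,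
    abs_div, abs_of_pos hlam, abs_sub_comm]
  exact max_eq_right (by positivity)

/-- Lipschitz estimate for the cut-off itself. With
`N_u(t) = ‖u‖_{L^p(σ,t;E₁)} + sup_{s∈[σ,t]} ‖j(u(s)) − u_σ‖` and
`θ_λ(t,u) = Φ_λ(N_u(t))`, one has, for every `t ∈ [σ, T]`,
`|θ_λ(t,u) − θ_λ(t,v)|
  ≤ λ⁻¹ ( ‖u − v‖_{L^p(σ,T;E₁)} + sup_{s∈[σ,T]} ‖j(u(s)) − j(v(s))‖ )`. -/
theorem stmt5
    {E₁ Ep : Type*}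
    [NormedAddCommGroup E₁] [NormedSpace ℝ E₁] [CompleteSpace E₁]
    [NormedAddCommGroup Ep] [NormedSpace ℝ Ep] [CompleteSpace Ep]
    (p σ T : ℝ) (hp : 2 < p) (hσT : σ ≤ T)
    (j : E₁ →L[ℝ] Ep) (hj : Function.Injective j)
    (uσ : Ep) (lam : ℝ) (hlam : 0 < lam)
    (u v : ℝ → E₁)
    (hu_meas : AEStronglyMeasurable u (volume.restrict (Set.Ioc σ T)))
    (hu_int : IntegrableOn (fun s => ‖u s‖ ^ p) (Set.Ioc σ T))
    (hu_cont : ContinuousOn (fun t => j (u t)) (Set.Icc σ T))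
    (hv_meas : AEStronglyMeasurable v (volume.restrict (Set.Ioc σ T)))
    (hv_int : IntegrableOn (fun s => ‖v s‖ ^ p) (Set.Ioc σ T))
    (hv_cont : ContinuousOn (fun t => j (v t)) (Set.Icc σ T))
    (t : ℝ) (ht : t ∈ Set.Icc σ T) :
    |cutoffPhi lam (lpNormOn p σ t u + ⨆ s : Set.Icc σ t, ‖j (u (s : ℝ)) - uσ‖) -
        cutoffPhi lam (lpNormOn p σ t v + ⨆ s : Set.Icc σ t, ‖j (v (s : ℝ)) - uσ‖)|
      ≤ lam⁻¹ *
          (lpNormOn p σ T (fun s => u s - v s) +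
            ⨆ s : Set.Icc σ T, ‖j (u (s : ℝ)) - j (v (s : ℝ))‖) := by
  obtain ⟨hσt, htT⟩ := ht
  have hp0 : (0:ℝ) < p := by linarith
  set P : ℝ≥0∞ := ENNReal.ofReal p with hPdef
  have hP0 : P ≠ 0 := by simp [hPdef, ENNReal.ofReal_eq_zero]; linarith
  have hPtop : P ≠ ∞ := ENNReal.ofReal_ne_top
  have hPtoReal : P.toReal = p := ENNReal.toReal_ofReal hp0.le
  have hP1 : 1 ≤ P := by
    rw [hPdef]; exact ENNReal.one_le_ofReal.mpr (by linarith)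
  set μT := volume.restrict (Set.Ioc σ T) with hμT
  set μt := volume.restrict (Set.Ioc σ t) with hμt
  have hle : μt ≤ μT := Measure.restrict_mono (Set.Ioc_subset_Ioc_right htT) le_rfl
  -- MemLp facts
  have memP : ∀ (f : ℝ → E₁), AEStronglyMeasurable f μT →
      IntegrableOn (fun s => ‖f s‖ ^ p) (Set.Ioc σ T) → MemLp f P μT := by
    intro f hmeas hint
    refine (memLp_norm_rpow_iff hmeas hP0 hPtop).mp ?_
    rw [hPtoReal, ENNReal.div_self hP0 hPtop]
    exact memLp_one_iff_integrable.mpr hint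
  have memu : MemLp u P μT := memP u hu_meas hu_int
  have memv : MemLp v P μT := memP v hv_meas hv_int
  have memd : MemLp (fun s => u s - v s) P μT := memu.sub memv
  -- lpNormOn equals toReal of eLpNorm
  have key : ∀ (f : ℝ → E₁), MemLp f P μT → ∀ b, b ≤ T →
      lpNormOn p σ b f = (eLpNorm f P (volume.restrict (Set.Ioc σ b))).toReal := by
    intro f hf b hb
    have hf' : MemLp f P (volume.restrict (Set.Ioc σ b)) :=
      hf.mono_measure (Measure.restrict_mono (Set.Ioc_subset_Ioc_right hb) le_rfl)
    rw [MemLp.eLpNorm_eq_integral_rpow_norm hP0 hPtop hf', hPtoReal]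
    rw [ENNReal.toReal_ofReal (by positivity)]
    rw [lpNormOn, one_div]
  have keyu := key u memu t htT
  have keyv := key v memv t htT
  have keyd := key (fun s => u s - v s) memd T le_rfl
  -- eLpNorm triangle inequalities
  have humeas_t : AEStronglyMeasurable u μt := hu_meas.mono_measure hle
  have hvmeas_t : AEStronglyMeasurable v μt := hv_meas.mono_measure hle
  have hd_le : eLpNorm (fun s => u s - v s) P μt ≤ eLpNorm (fun s => u s - v s) P μT :=
    eLpNorm_mono_measure _ hle
  have tri1 : eLpNorm u P μt ≤ eLpNorm v P μt + eLpNorm (fun s => u s - v s) P μT := by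
    have : eLpNorm u P μt = eLpNorm (fun s => v s + (u s - v s)) P μt := by
      congr 1; funext s; abel
    rw [this]
    exact (eLpNorm_add_le hvmeas_t (humeas_t.sub hvmeas_t) hP1).trans
      (add_le_add_right hd_le _)
  have tri2 : eLpNorm v P μt ≤ eLpNorm u P μt + eLpNorm (fun s => u s - v s) P μT := by
    have : eLpNorm v P μt = eLpNorm (fun s => u s - (u s - v s)) P μt := by
      congr 1; funext s; abel
    rw [this]
    refine (eLpNorm_sub_le humeas_t (humeas_t.sub hvmeas_t) hP1).trans
      (add_le_add_right hd_le _)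
  -- finiteness
  have fin_u : eLpNorm u P μt ≠ ∞ := ((memu.mono_measure hle).2).ne
  have fin_v : eLpNorm v P μt ≠ ∞ := ((memv.mono_measure hle).2).ne
  have fin_d : eLpNorm (fun s => u s - v s) P μT ≠ ∞ := memd.2.ne
  -- real version of the Lp estimate
  have lp_abs : |lpNormOn p σ t u - lpNormOn p σ t v| ≤ lpNormOn p σ T (fun s => u s - v s) := by
    rw [keyu, keyv, keyd, abs_sub_le_iff]
    constructor
    · have := ENNReal.toReal_mono (by simp [fin_v, fin_d, ENNReal.add_ne_top]) tri1
      rw [ENNReal.toReal_add fin_v fin_d] at this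
      linarith
    · have := ENNReal.toReal_mono (by simp [fin_u, fin_d, ENNReal.add_ne_top]) tri2
      rw [ENNReal.toReal_add fin_u fin_d] at this
      linarith
  -- sup part
  have hsub : Set.Icc σ t ⊆ Set.Icc σ T := Set.Icc_subset_Icc_right htT
  have hne : Nonempty (Set.Icc σ t) := ⟨⟨σ, le_refl σ, hσt⟩⟩
  obtain ⟨Cu, hCu⟩ := isCompact_Icc.exists_bound_of_continuousOn
    (hu_cont.sub continuousOn_const : ContinuousOn (fun s => j (u s) - uσ) (Set.Icc σ T))
  obtain ⟨Cv, hCv⟩ := isCompact_Icc.exists_bound_of_continuousOn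
    (hv_cont.sub continuousOn_const : ContinuousOn (fun s => j (v s) - uσ) (Set.Icc σ T))
  obtain ⟨Cd, hCd⟩ := isCompact_Icc.exists_bound_of_continuousOn
    (hu_cont.sub hv_cont : ContinuousOn (fun s => j (u s) - j (v s)) (Set.Icc σ T))
  have bddu : BddAbove (Set.range fun s : Set.Icc σ t => ‖j (u (s : ℝ)) - uσ‖) := by
    refine ⟨Cu, ?_⟩; rintro x ⟨s, rfl⟩
    simpa using hCu s (hsub s.2)
  have bddv : BddAbove (Set.range fun s : Set.Icc σ t => ‖j (v (s : ℝ)) - uσ‖) := by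
    refine ⟨Cv, ?_⟩; rintro x ⟨s, rfl⟩
    simpa using hCv s (hsub s.2)
  have bddd : BddAbove (Set.range fun s : Set.Icc σ T => ‖j (u (s : ℝ)) - j (v (s : ℝ))‖) := by
    refine ⟨Cd, ?_⟩; rintro x ⟨s, rfl⟩
    simpa using hCd s s.2
  set Su := ⨆ s : Set.Icc σ t, ‖j (u (s : ℝ)) - uσ‖ with hSu
  set Sv := ⨆ s : Set.Icc σ t, ‖j (v (s : ℝ)) - uσ‖ with hSv
  set Sd := ⨆ s : Set.Icc σ T, ‖j (u (s : ℝ)) - j (v (s : ℝ))‖ with hSd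
  have sup_le : ∀ s : Set.Icc σ t, ‖j (u (s : ℝ)) - j (v (s : ℝ))‖ ≤ Sd := by
    intro s
    exact le_ciSup bddd (⟨(s : ℝ), hsub s.2⟩ : Set.Icc σ T)
  have sup1 : Su ≤ Sv + Sd := by
    refine ciSup_le fun s => ?_
    have h1 : ‖j (u (s : ℝ)) - uσ‖ ≤ ‖j (v (s : ℝ)) - uσ‖ + ‖j (u (s : ℝ)) - j (v (s : ℝ))‖ := by
      have : j (u (s : ℝ)) - uσ = (j (v (s : ℝ)) - uσ) + (j (u (s : ℝ)) - j (v (s : ℝ))) := by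
        abel
      rw [this]; exact norm_add_le _ _
    exact h1.trans (add_le_add (le_ciSup bddv s) (sup_le s))
  have sup2 : Sv ≤ Su + Sd := by
    refine ciSup_le fun s => ?_
    have h1 : ‖j (v (s : ℝ)) - uσ‖ ≤ ‖j (u (s : ℝ)) - uσ‖ + ‖j (u (s : ℝ)) - j (v (s : ℝ))‖ := by
      have : j (v (s : ℝ)) - uσ = (j (u (s : ℝ)) - uσ) - (j (u (s : ℝ)) - j (v (s : ℝ))) := by
        abel
      rw [this]; exact norm_sub_le _ _
    exact h1.trans (add_le_add (le_ciSup bddu s) (sup_le s))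
  have sup_abs : |Su - Sv| ≤ Sd := abs_sub_le_iff.mpr ⟨by linarith, by linarith⟩
  -- conclude
  refine (cutoffPhi_lip lam hlam _ _).trans ?_
  rw [div_eq_inv_mul]
  refine mul_le_mul_of_nonneg_left ?_ (by positivity)
  calc |lpNormOn p σ t u + Su - (lpNormOn p σ t v + Sv)|
      = |(lpNormOn p σ t u - lpNormOn p σ t v) + (Su - Sv)| := by ring_nf
    _ ≤ |lpNormOn p σ t u - lpNormOn p σ t v| + |Su - Sv| := abs_add_le _ _
    _ ≤ lpNormOn p σ T (fun s => u s - v s) + Sd := add_le_add lp_abs sup_abs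
end
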